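/- arXiv:2206.11986 — 8 statements merged into one kernel-verified Lean document; each statement's English description precedes it below -/
import Mathlib

section
/- Let V be a vector space over Q with dual V*, and let S ⊂ V and S* ⊂ V* be finite sets. Assume (1) for each φ ∈ S* there exists u ∈ S with φ(u) ≠ 0, and (2) there exists t ≥ 1 such that for each u ∈ S, at most t elements φ ∈ S* satisfy φ(u) ≠ 0. Then the dimension of the span of S is at least |S*|/t. -/
open scoped Classical

/-- Xue's linear algebra lemma: if every functional in `Sstar` pairs nontrivially
with some element of `S`, and each element of `S` pairs nontrivially with at most
`t` elements of `Sstar`, then `dim span S ≥ |Sstar| / t`. -/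
theorem statement_0 {V : Type*} [AddCommGroup V] [Module ℚ V]
    (S : Finset V) (Sstar : Finset (V →ₗ[ℚ] ℚ)) (t : ℕ) (ht : 1 ≤ t)
    (h1 : ∀ φ ∈ Sstar, ∃ u ∈ S, φ u ≠ 0)
    (h2 : ∀ u ∈ S, (Sstar.filter (fun φ => φ u ≠ 0)).card ≤ t) :
    (Sstar.card : ℚ) / (t : ℚ) ≤ (Module.finrank ℚ (Submodule.span ℚ (S : Set V)) : ℚ) := by
  obtain ⟨b, hbS, hspan, hindep⟩ := exists_linearIndependent ℚ (S : Set V)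
  have hbfin : b.Finite := S.finite_toSet.subset hbS
  lift b to Finset V using hbfin with B hB
  subst hB
  -- each φ in Sstar is nonzero on some element of B
  have key : ∀ φ ∈ Sstar, ∃ u ∈ B, φ u ≠ 0 := by
    intro φ hφ
    by_contra h
    push_neg at h
    obtain ⟨u, hu, hφu⟩ := h1 φ hφ
    have hle : Submodule.span ℚ (B : Set V) ≤ LinearMap.ker φ := by
      rw [Submodule.span_le]
      intro x hx
      exact h x hx
    have : u ∈ Submodule.span ℚ (B : Set V) := by
      rw [hspan]
      exact Submodule.subset_span hu
    exact hφu (hle this)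
  have hsub : Sstar ⊆ B.biUnion (fun u => Sstar.filter (fun φ => φ u ≠ 0)) := by
    intro φ hφ
    obtain ⟨u, hu, hφu⟩ := key φ hφ
    exact Finset.mem_biUnion.2 ⟨u, hu, Finset.mem_filter.2 ⟨hφ, hφu⟩⟩
  have hcard : Sstar.card ≤ B.card * t := by
    calc Sstar.card ≤ (B.biUnion (fun u => Sstar.filter (fun φ => φ u ≠ 0))).card :=
          Finset.card_le_card hsub
      _ ≤ ∑ u ∈ B, (Sstar.filter (fun φ => φ u ≠ 0)).card := Finset.card_biUnion_le
      _ ≤ ∑ _u ∈ B, t := Finset.sum_le_sum (fun u hu => h2 u (hbS hu))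
      _ = B.card * t := by rw [Finset.sum_const, smul_eq_mul]
  haveI : Fintype (B : Set V) := FinsetCoe.fintype B
  have hB : Module.finrank ℚ (Submodule.span ℚ (B : Set V)) = B.card := by
    rw [finrank_span_set_eq_card hindep]
    simp
  have hdim : B.card = Module.finrank ℚ (Submodule.span ℚ (S : Set V)) := by
    rw [← hspan, hB]
  rw [div_le_iff₀ (by exact_mod_cast ht : (0:ℚ) < t)]
  rw [← hdim]
  exact_mod_cast hcard
end

section
/- Fix n ≥ 6 and integers 0 = a_0 < a_1 < ⋯ < a_n with a_{i+1} − a_i > 2 for all i. Then the polynomial ξ = 1 + x(x − a_1)⋯(x − a_n) ∈ Z[x] has n+1 distinct real roots. -/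
open Polynomial

/-- The polynomial `ξ = 1 + x(x - a₁)⋯(x - aₙ)` with `0 = a₀ < a₁ < ⋯ < aₙ`
and gaps `a_{i+1} - a_i > 2` has `n + 1` distinct real roots. -/
theorem statement_1 (n : ℕ) (hn : 6 ≤ n) (a : ℕ → ℤ)
    (ha0 : a 0 = 0)
    (hmono : ∀ i, i < n → a i < a (i + 1))
    (hgap : ∀ i, i < n → 2 < a (i + 1) - a i) :
    ((((1 : ℤ[X]) + ∏ i ∈ Finset.range (n + 1), (X - C (a i))).map
        (Int.castRingHom ℝ)).roots.toFinset.card) = n + 1 := by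
  have hstep : ∀ i, i < n → a i + 3 ≤ a (i + 1) := fun i hi => by
    have := hgap i hi; omega
  have hlt : ∀ j k, j < k → k ≤ n → a j + 3 ≤ a k := by
    intro j k
    induction k with
    | zero => intro h _; omega
    | succ m ih =>
      intro hjk hkn
      rcases Nat.lt_succ_iff_lt_or_eq.mp hjk with h | h
      · have h1 := ih h (by omega)
        have h2 := hstep m (by omega)
        omega
      · subst h; exact hstep j (by omega)
  have one_le_prodZ : ∀ (s : Finset ℕ) (f : ℕ → ℤ), (∀ i ∈ s, 1 ≤ f i) →
      1 ≤ ∏ i ∈ s, f i := by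
    intro s f h
    calc (1 : ℤ) = ∏ _i ∈ s, 1 := by simp
      _ ≤ ∏ i ∈ s, f i := Finset.prod_le_prod (by intros; norm_num) h
  set P : ℤ[X] := (1 : ℤ[X]) + ∏ i ∈ Finset.range (n + 1), (X - C (a i)) with hP
  set Q : ℝ[X] := P.map (Int.castRingHom ℝ) with hQ
  have hmonicprod : (∏ i ∈ Finset.range (n + 1), (X - C (a i))).Monic :=
    Polynomial.monic_prod_of_monic _ _ fun i _ => monic_X_sub_C _
  have hdegprod : (∏ i ∈ Finset.range (n + 1), (X - C (a i))).natDegree = n + 1 := by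
    rw [Polynomial.natDegree_prod_of_monic _ _ fun i _ => monic_X_sub_C _]
    simp only [Polynomial.natDegree_X_sub_C, Finset.sum_const, Finset.card_range,
      smul_eq_mul, mul_one]
  have hdlt : (1 : ℤ[X]).degree < (∏ i ∈ Finset.range (n + 1), (X - C (a i))).degree := by
    rw [Polynomial.degree_one, Polynomial.degree_eq_natDegree hmonicprod.ne_zero, hdegprod]
    exact_mod_cast Nat.succ_pos n
  have hPmonic : P.Monic := hmonicprod.add_of_right hdlt
  have hPdeg : P.natDegree = n + 1 := by
    rw [hP, add_comm, ← Polynomial.C_1, Polynomial.natDegree_add_C, hdegprod]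
  have hQmonic : Q.Monic := hPmonic.map _
  have hQdeg : Q.natDegree = n + 1 := by rw [hQ, hPmonic.natDegree_map, hPdeg]
  set g : ℝ → ℝ := fun x => 1 + ∏ i ∈ Finset.range (n + 1), (x - (a i : ℝ)) with hg
  have heval : ∀ x : ℝ, Q.eval x = g x := by
    intro x
    simp [hQ, hP, hg, Polynomial.map_prod, Polynomial.map_sub, Polynomial.eval_prod]
  have hcont : Continuous g := by
    have h1 : (fun x : ℝ => Q.eval x) = g := funext heval
    rw [← h1]
    exact Q.continuous
  -- value 1 at the integers a k
  have key_pos : ∀ k, k ≤ n → g ((a k : ℝ)) = 1 := by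
    intro k hk
    simp only [hg]
    have hz : ∏ i ∈ Finset.range (n + 1), ((a k : ℝ) - a i) = 0 :=
      Finset.prod_eq_zero (i := k) (Finset.mem_range.mpr (by omega)) (by simp)
    rw [hz]; ring
  -- value ≤ -1 at a k - 1 when n - k is even
  have key_neg : ∀ k, k ≤ n → (n - k) % 2 = 0 → g ((a k : ℝ) - 1) ≤ -1 := by
    intro k hk hpar
    have hA1 : (1 : ℤ) ≤ ∏ i ∈ Finset.range k, (a k - 1 - a i) := by
      refine one_le_prodZ _ _ fun i hi => ?_
      have := hlt i k (Finset.mem_range.mp hi) hk; omega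
    have hB'terms : ∀ i ∈ Finset.Ico k (n + 1), (1 : ℤ) ≤ a i + 1 - a k := by
      intro i hi
      rcases Finset.mem_Ico.mp hi with ⟨h1, h2⟩
      rcases eq_or_lt_of_le h1 with rfl | h
      · omega
      · have := hlt k i h (by omega); omega
    have hBneg : ∏ i ∈ Finset.Ico k (n + 1), (a k - 1 - a i)
        = - ∏ i ∈ Finset.Ico k (n + 1), (a i + 1 - a k) := by
      have h1 : ∀ i ∈ Finset.Ico k (n + 1), a k - 1 - a i = -1 * (a i + 1 - a k) :=
        fun i _ => by ring
      rw [Finset.prod_congr rfl h1, Finset.prod_mul_distrib, Finset.prod_const,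
        Nat.card_Ico]
      have hodd : Odd (n + 1 - k) := by rw [Nat.odd_iff]; omega
      rw [hodd.neg_one_pow]; ring
    have hmain : (∏ i ∈ Finset.range (n + 1), (a k - 1 - a i)) ≤ -2 := by
      rw [← Finset.prod_range_mul_prod_Ico _ (show k ≤ n + 1 by omega), hBneg]
      by_cases hkn : k = n
      · subst hkn
        have hB'eq : ∏ i ∈ Finset.Ico k (k + 1), (a i + 1 - a k) = 1 := by
          rw [Nat.Ico_succ_singleton]; simp
        have h2A : (2 : ℤ) ≤ ∏ i ∈ Finset.range k, (a k - 1 - a i) := by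
          have hle2 : ∏ i ∈ Finset.range k, (if i = 0 then (2 : ℤ) else 1)
              ≤ ∏ i ∈ Finset.range k, (a k - 1 - a i) := by
            refine Finset.prod_le_prod ?_ ?_
            · intro i _; split <;> norm_num
            · intro i hi
              have hi' := Finset.mem_range.mp hi
              have h3 := hlt i k hi' le_rfl
              split
              · next h => subst h; omega
              · omega
          have heq : ∏ i ∈ Finset.range k, (if i = 0 then (2 : ℤ) else 1) = 2 := by
            rw [Finset.prod_ite_eq' (Finset.range k) 0 (fun _ => (2 : ℤ))]
            simp [Finset.mem_range, show 0 < k by omega]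
          linarith
        rw [hB'eq]
        nlinarith
      · have hkltn : k < n := lt_of_le_of_ne hk hkn
        have h4B : (4 : ℤ) ≤ ∏ i ∈ Finset.Ico k (n + 1), (a i + 1 - a k) := by
          rw [Finset.prod_Ico_succ_top (show k ≤ n by omega)]
          have h1 : (1 : ℤ) ≤ ∏ i ∈ Finset.Ico k n, (a i + 1 - a k) := by
            refine one_le_prodZ _ _ fun i hi => ?_
            rcases Finset.mem_Ico.mp hi with ⟨ha1, ha2⟩
            exact hB'terms i (Finset.mem_Ico.mpr ⟨ha1, by omega⟩)
          have h4 : (4 : ℤ) ≤ a n + 1 - a k := by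
            have := hlt k n hkltn le_rfl; omega
          nlinarith
        nlinarith
    have hcast : g ((a k : ℝ) - 1)
        = 1 + ((∏ i ∈ Finset.range (n + 1), (a k - 1 - a i) : ℤ) : ℝ) := by
      simp only [hg]
      rw [Int.cast_prod]
      congr 1
      refine Finset.prod_congr rfl fun i _ => ?_
      push_cast
      ring
    rw [hcast]
    have : ((∏ i ∈ Finset.range (n + 1), (a k - 1 - a i) : ℤ) : ℝ) ≤ -2 := by
      exact_mod_cast hmain
    linarith
  -- the interlacing points
  set b : ℕ → ℝ := fun k =>
    if k ≤ n then (if (n - k) % 2 = 0 then (a k : ℝ) - 1 else (a k : ℝ)) else (a n : ℝ)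
    with hb
  have hblt : ∀ k, k ≤ n → b k < b (k + 1) := by
    intro k hk
    by_cases hkn : k = n
    · subst hkn
      simp only [hb]
      rw [if_pos le_rfl, if_pos (by omega : (k - k) % 2 = 0), if_neg (by omega)]
      linarith
    · have hkltn : k < n := lt_of_le_of_ne hk hkn
      have h3 : a k + 3 ≤ a (k + 1) := hstep k hkltn
      have h3' : (a k : ℝ) + 3 ≤ (a (k + 1) : ℝ) := by exact_mod_cast h3
      by_cases hp : (n - k) % 2 = 0
      · simp only [hb]
        rw [if_pos hk, if_pos (by omega : k + 1 ≤ n), if_pos hp,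
          if_neg (by omega : ¬ (n - (k + 1)) % 2 = 0)]
        linarith
      · simp only [hb]
        rw [if_pos hk, if_pos (by omega : k + 1 ≤ n), if_neg hp,
          if_pos (by omega : (n - (k + 1)) % 2 = 0)]
        linarith
  -- roots in each interval by IVT
  have hex : ∀ k : ℕ, ∃ y : ℝ, k ≤ n → (y ∈ Set.Ioo (b k) (b (k + 1)) ∧ Q.eval y = 0) := by
    intro k
    by_cases hk : k ≤ n
    · have hble : b k ≤ b (k + 1) := le_of_lt (hblt k hk)
      have hcontOn : ContinuousOn g (Set.Icc (b k) (b (k + 1))) := hcont.continuousOn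
      by_cases hp : (n - k) % 2 = 0
      · have h1 : g (b k) ≤ -1 := by
          have hbk : b k = (a k : ℝ) - 1 := by
            simp only [hb]; rw [if_pos hk, if_pos hp]
          rw [hbk]; exact key_neg k hk hp
        have h2 : g (b (k + 1)) = 1 := by
          by_cases hkn : k = n
          · subst hkn
            have hbk : b (k + 1) = (a k : ℝ) := by
              simp only [hb]; rw [if_neg (by omega)]
            rw [hbk]; exact key_pos k le_rfl
          · have hk1 : k + 1 ≤ n := by omega
            have hbk : b (k + 1) = (a (k + 1) : ℝ) := by
              simp only [hb]; rw [if_pos hk1, if_neg (by omega)]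
            rw [hbk]; exact key_pos (k + 1) hk1
        have h0 : (0 : ℝ) ∈ Set.Ioo (g (b k)) (g (b (k + 1))) := by
          constructor
          · linarith
          · rw [h2]; norm_num
        obtain ⟨y, hy1, hy2⟩ := intermediate_value_Ioo hble hcontOn h0
        exact ⟨y, fun _ => ⟨hy1, by rw [heval y]; exact hy2⟩⟩
      · have hkltn : k < n := by omega
        have h1 : g (b k) = 1 := by
          have hbk : b k = (a k : ℝ) := by
            simp only [hb]; rw [if_pos hk, if_neg hp]
          rw [hbk]; exact key_pos k hk
        have h2 : g (b (k + 1)) ≤ -1 := by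
          have hp1 : (n - (k + 1)) % 2 = 0 := by omega
          have hbk : b (k + 1) = (a (k + 1) : ℝ) - 1 := by
            simp only [hb]; rw [if_pos (by omega : k + 1 ≤ n), if_pos hp1]
          rw [hbk]; exact key_neg (k + 1) (by omega) hp1
        have h0 : (0 : ℝ) ∈ Set.Ioo (g (b (k + 1))) (g (b k)) := by
          constructor
          · linarith
          · rw [h1]; norm_num
        obtain ⟨y, hy1, hy2⟩ := intermediate_value_Ioo' hble hcontOn h0
        exact ⟨y, fun _ => ⟨hy1, by rw [heval y]; exact hy2⟩⟩
    · exact ⟨0, fun h => absurd h hk⟩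
  choose r hr using hex
  have hrmono : ∀ j k, j < k → k ≤ n → r j < r k := by
    intro j k
    induction k with
    | zero => intro h _; omega
    | succ m ih =>
      intro hjk hkn
      have hm : m ≤ n := by omega
      have h1 : r m < b (m + 1) := ((hr m hm).1).2
      have h2 : b (m + 1) < r (m + 1) := ((hr (m + 1) hkn).1).1
      rcases Nat.lt_succ_iff_lt_or_eq.mp hjk with h | h
      · have := ih h hm; linarith
      · subst h; linarith
  have hmaps : ∀ k ∈ Finset.range (n + 1), r k ∈ Q.roots.toFinset := by
    intro k hk
    have hk' : k ≤ n := by have := Finset.mem_range.mp hk; omega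
    rw [Multiset.mem_toFinset, Polynomial.mem_roots']
    exact ⟨hQmonic.ne_zero, (hr k hk').2⟩
  have hinj : Set.InjOn r (Finset.range (n + 1)) := by
    intro j hj k hk hjk
    simp only [Finset.coe_range, Set.mem_Iio] at hj hk
    by_contra hne
    rcases lt_or_gt_of_ne hne with h | h
    · exact absurd hjk (ne_of_lt (hrmono j k h (by omega)))
    · exact absurd hjk.symm (ne_of_lt (hrmono k j h (by omega)))
  have hge : n + 1 ≤ Q.roots.toFinset.card := by
    have := Finset.card_le_card_of_injOn r hmaps hinj
    simpa using this
  have hle : Q.roots.toFinset.card ≤ n + 1 := by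
    calc Q.roots.toFinset.card ≤ Multiset.card Q.roots := Multiset.toFinset_card_le _
      _ ≤ Q.natDegree := Polynomial.card_roots' Q
      _ = n + 1 := hQdeg
  omega
end

section
/- Fix n ≥ 6 and integers 0 = a_0 < a_1 < ⋯ < a_n with a_{i+1} − a_i > 2 for all i. Then the polynomial ξ = 1 + x(x − a_1)⋯(x − a_n) ∈ Z[x] is irreducible in Q[x]. -/
open Polynomial

private lemma aux_key (n : ℕ) (hn : 6 ≤ n) (a : ℕ → ℤ)
    (hsep : ∀ i j, i ≤ n → j ≤ n → i ≠ j → 3 ≤ |a j - a i|)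
    (f g : ℤ[X]) (hf : f.Monic) (hg : g.Monic)
    (hfu : ¬ IsUnit f) (hgu : ¬ IsUnit g)
    (hfg : 1 + ∏ i ∈ Finset.range (n + 1), (X - C (a i)) = f * g) : False := by
  classical
  set P : ℤ[X] := ∏ i ∈ Finset.range (n + 1), (X - C (a i)) with hPdef
  have hPm : P.Monic := monic_prod_of_monic _ _ fun i _ => monic_X_sub_C _
  have hPdeg : P.natDegree = n + 1 := by
    rw [hPdef, natDegree_prod_of_monic _ _ fun i _ => monic_X_sub_C _]
    simp only [natDegree_X_sub_C]
    simp
  have hinj : ∀ i j, i ≤ n → j ≤ n → a i = a j → i = j := by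
    intro i j hi hj hij
    by_contra hne
    have h := hsep i j hi hj hne
    rw [hij, sub_self, abs_zero] at h
    omega
  have hPe : ∀ i, i ≤ n → P.eval (a i) = 0 := by
    intro i hi
    rw [hPdef, eval_prod]
    exact Finset.prod_eq_zero (i := i) (Finset.mem_range.mpr (by omega)) (by simp)
  have hfne : f ≠ 0 := hf.ne_zero
  have hgne : g ≠ 0 := hg.ne_zero
  have hsum : f.natDegree + g.natDegree = n + 1 := by
    have h1 : (f * g).natDegree = n + 1 := by
      rw [← hfg]
      have hlt : (1 : ℤ[X]).degree < P.degree := by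
        rw [degree_one, degree_eq_natDegree hPm.ne_zero, hPdeg]
        exact_mod_cast Nat.succ_pos n
      rw [natDegree_eq_of_degree_eq (degree_add_eq_right_of_degree_lt hlt), hPdeg]
    rwa [natDegree_mul hfne hgne] at h1
  have hfd1 : 1 ≤ f.natDegree := by
    rcases Nat.eq_zero_or_pos f.natDegree with h | h
    · exact absurd (hf.natDegree_eq_zero.mp h ▸ isUnit_one) hfu
    · omega
  have hgd1 : 1 ≤ g.natDegree := by
    rcases Nat.eq_zero_or_pos g.natDegree with h | h
    · exact absurd (hg.natDegree_eq_zero.mp h ▸ isUnit_one) hgu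
    · omega
  have hfevals : ∀ i, i ≤ n → f.eval (a i) * g.eval (a i) = 1 := by
    intro i hi
    have h : (f * g).eval (a i) = 1 := by
      rw [← hfg]; simp [eval_add, hPe i hi]
    simpa [eval_mul] using h
  -- f = g
  have hfeqg : f = g := by
    have h0 : f - g = 0 := by
      apply eq_zero_of_natDegree_lt_card_of_eval_eq_zero' _ ((Finset.range (n + 1)).image a)
      · rintro x hx
        obtain ⟨i, hi, rfl⟩ := Finset.mem_image.mp hx
        have hi' : i ≤ n := by have := Finset.mem_range.mp hi; omega
        rcases Int.mul_eq_one_iff_eq_one_or_neg_one.mp (hfevals i hi') with ⟨h1, h2⟩ | ⟨h1, h2⟩ <;>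
          simp [eval_sub, h1, h2]
      · rw [Finset.card_image_of_injOn]
        · calc (f - g).natDegree ≤ max f.natDegree g.natDegree := natDegree_sub_le f g
            _ ≤ n := max_le (by omega) (by omega)
            _ < (Finset.range (n + 1)).card := by simp
        · intro x hx y hy hxy
          have hx' := Finset.mem_range.mp (Finset.mem_coe.mp hx)
          have hy' := Finset.mem_range.mp (Finset.mem_coe.mp hy)
          exact hinj x y (by omega) (by omega) hxy
    exact sub_eq_zero.mp h0
  subst hfeqg
  set m := f.natDegree with hm
  have h2m : m + m = n + 1 := hsum
  have hm1 : 1 ≤ m := hfd1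
  have hdich : ∀ i, i ≤ n → f.eval (a i) = 1 ∨ f.eval (a i) = -1 := fun i hi =>
    mul_self_eq_one_iff.mp (hfevals i hi)
  set S : Finset ℕ := (Finset.range (n + 1)).filter (fun i => f.eval (a i) = 1) with hS
  set T : Finset ℕ := (Finset.range (n + 1)).filter (fun i => ¬ f.eval (a i) = 1) with hT
  have hST : S.card + T.card = n + 1 := by
    rw [hS, hT, Finset.card_filter_add_card_filter_not]
    simp
  have hinjS : Set.InjOn a ↑S := by
    intro x hx y hy hxy
    have hx' := Finset.mem_range.mp (Finset.mem_filter.mp (Finset.mem_coe.mp hx)).1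
    have hy' := Finset.mem_range.mp (Finset.mem_filter.mp (Finset.mem_coe.mp hy)).1
    exact hinj x y (by omega) (by omega) hxy
  have hSle : S.card ≤ m := by
    by_contra hlt
    push_neg at hlt
    have h0 : f - 1 = 0 := by
      apply eq_zero_of_natDegree_lt_card_of_eval_eq_zero' _ (S.image a)
      · rintro x hx
        obtain ⟨i, hi, rfl⟩ := Finset.mem_image.mp hx
        have h1 : f.eval (a i) = 1 := (Finset.mem_filter.mp hi).2
        simp [h1]
      · rw [Finset.card_image_of_injOn hinjS]
        calc (f - 1).natDegree = f.natDegree := by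
              rw [show (1 : ℤ[X]) = C 1 by simp, natDegree_sub_C]
          _ < S.card := hlt
    have : f = 1 := by rwa [sub_eq_zero] at h0
    exact hfu (this ▸ isUnit_one)
  have hTle : T.card ≤ m := by
    by_contra hlt
    push_neg at hlt
    have h0 : f + 1 = 0 := by
      apply eq_zero_of_natDegree_lt_card_of_eval_eq_zero' _ (T.image a)
      · rintro x hx
        obtain ⟨i, hi, rfl⟩ := Finset.mem_image.mp hx
        have hi' : i ≤ n := by
          have := Finset.mem_range.mp (Finset.mem_filter.mp hi).1; omega
        have h1 : f.eval (a i) = -1 := by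
          rcases hdich i hi' with h | h
          · exact absurd h (Finset.mem_filter.mp hi).2
          · exact h
        simp [h1]
      · rw [Finset.card_image_of_injOn]
        · calc (f + 1).natDegree = f.natDegree := by
                rw [show (1 : ℤ[X]) = C 1 by simp, ← sub_neg_eq_add,
                  show -C (1:ℤ) = C (-1) by simp, natDegree_sub_C]
            _ < T.card := hlt
        · intro x hx y hy hxy
          have hx' := Finset.mem_range.mp (Finset.mem_filter.mp (Finset.mem_coe.mp hx)).1
          have hy' := Finset.mem_range.mp (Finset.mem_filter.mp (Finset.mem_coe.mp hy)).1
          exact hinj x y (by omega) (by omega) hxy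
    have : f = -1 := by linear_combination h0
    exact hfu (this ▸ isUnit_one.neg)
  have hSm : S.card = m := by omega
  have hTm : T.card = m := by omega
  -- f - 1 = ∏ i in S, (X - C (a i))
  set Q : ℤ[X] := ∏ i ∈ S, (X - C (a i)) with hQ
  have hQm : Q.Monic := monic_prod_of_monic _ _ fun i _ => monic_X_sub_C _
  have hQdeg : Q.natDegree = m := by
    rw [hQ, natDegree_prod_of_monic _ _ fun i _ => monic_X_sub_C _]
    simp only [natDegree_X_sub_C]
    simp [hSm]
  have hf1deg : (f - 1).natDegree = m := by
    rw [show (1 : ℤ[X]) = C 1 by simp, natDegree_sub_C]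
  have hf1m : (f - 1).Monic := by
    have hlt : (-1 : ℤ[X]).degree < f.degree := by
      rw [degree_eq_natDegree hfne, ← hm, degree_neg, degree_one]
      exact_mod_cast hm1
    have := hf.add_of_left hlt
    simpa [sub_eq_add_neg] using this
  have hdeg_eq : (f - 1).degree = Q.degree := by
    rw [degree_eq_natDegree hf1m.ne_zero, degree_eq_natDegree hQm.ne_zero, hf1deg, hQdeg]
  have hfQ : f - 1 = Q := by
    have h0 : (f - 1) - Q = 0 := by
      rcases eq_or_ne ((f - 1) - Q) 0 with h | h
      · exact h
      apply eq_zero_of_natDegree_lt_card_of_eval_eq_zero' _ (S.image a)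
      · rintro x hx
        obtain ⟨i, hi, rfl⟩ := Finset.mem_image.mp hx
        have h1 : f.eval (a i) = 1 := (Finset.mem_filter.mp hi).2
        have h2 : Q.eval (a i) = 0 := by
          rw [hQ, eval_prod]
          exact Finset.prod_eq_zero hi (by simp)
        simp [h1, h2]
      · rw [Finset.card_image_of_injOn hinjS, hSm]
        have hlt : ((f - 1) - Q).degree < (f - 1).degree :=
          degree_sub_lt hdeg_eq hf1m.ne_zero (by rw [hf1m.leadingCoeff, hQm.leadingCoeff])
        have := natDegree_lt_natDegree h hlt
        rwa [hf1deg] at this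
    exact sub_eq_zero.mp h0
  -- pick j ∈ T and derive contradiction
  have hTne : T.Nonempty := Finset.card_pos.mp (by omega)
  obtain ⟨j, hj⟩ := hTne
  have hjn : j ≤ n := by
    have := Finset.mem_range.mp (Finset.mem_filter.mp hj).1; omega
  have hjval : f.eval (a j) = -1 := by
    rcases hdich j hjn with h | h
    · exact absurd h (Finset.mem_filter.mp hj).2
    · exact h
  have hev2 : ∏ i ∈ S, (a j - a i) = -2 := by
    have h1 : Q.eval (a j) = -2 := by
      rw [← hfQ]; simp [hjval]
    rw [← h1, hQ, eval_prod]
    simp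
  have hfac : ∀ i ∈ S, (3 : ℤ) ≤ |a j - a i| := by
    intro i hi
    have hi' : i ≤ n := by
      have := Finset.mem_range.mp (Finset.mem_filter.mp hi).1; omega
    have hne : i ≠ j := by
      intro h
      rw [h] at hi
      exact absurd ((Finset.mem_filter.mp hi).2) (by rw [hjval]; norm_num)
    exact hsep i j hi' hjn hne
  have habs : (3 : ℤ) ^ m ≤ 2 := by
    calc (3 : ℤ) ^ m = ∏ _i ∈ S, (3 : ℤ) := by rw [Finset.prod_const, hSm]
      _ ≤ ∏ i ∈ S, |a j - a i| :=
          Finset.prod_le_prod (fun i _ => by norm_num) hfac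
      _ = |∏ i ∈ S, (a j - a i)| := (Finset.abs_prod _ _).symm
      _ = 2 := by rw [hev2]; norm_num
  have h3 : (3 : ℤ) ≤ 3 ^ m := by
    calc (3 : ℤ) = 3 ^ 1 := (pow_one 3).symm
      _ ≤ 3 ^ m := pow_le_pow_right₀ (by norm_num) hm1
  linarith

/-- The polynomial `ξ = 1 + x(x - a₁)⋯(x - aₙ)` with `0 = a₀ < a₁ < ⋯ < aₙ`
and gaps `a_{i+1} - a_i > 2` is irreducible in `ℚ[x]`. -/
theorem statement_2 (n : ℕ) (hn : 6 ≤ n) (a : ℕ → ℤ)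
    (ha0 : a 0 = 0)
    (hmono : ∀ i, i < n → a i < a (i + 1))
    (hgap : ∀ i, i < n → 2 < a (i + 1) - a i) :
    Irreducible ((((1 : ℤ[X]) + ∏ i ∈ Finset.range (n + 1), (X - C (a i))).map
      (Int.castRingHom ℚ))) := by
  have hstep : ∀ j, j ≤ n → ∀ i, i < j → a i + 3 ≤ a j := by
    intro j
    induction j with
    | zero => intro _ i hi; omega
    | succ k ih =>
      intro hk i hi
      have h3 := hgap k (by omega)
      rcases Nat.lt_succ_iff_lt_or_eq.mp hi with h | h
      · have := ih (by omega) i h; omega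
      · subst h; omega
  have hsep : ∀ i j, i ≤ n → j ≤ n → i ≠ j → 3 ≤ |a j - a i| := by
    intro i j hi hj hne
    rcases Nat.lt_or_ge i j with h | h
    · have := hstep j hj i h
      rw [abs_of_nonneg (by omega)]; omega
    · have h' : j < i := by omega
      have := hstep i hi j h'
      rw [abs_of_nonpos (by omega)]; omega
  have hPm : (∏ i ∈ Finset.range (n + 1), (X - C (a i))).Monic :=
    monic_prod_of_monic _ _ fun i _ => monic_X_sub_C _
  have hPdeg : (∏ i ∈ Finset.range (n + 1), (X - C (a i))).natDegree = n + 1 := by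
    rw [natDegree_prod_of_monic _ _ fun i _ => monic_X_sub_C _]
    simp only [natDegree_X_sub_C]
    simp
  have hlt : (1 : ℤ[X]).degree < (∏ i ∈ Finset.range (n + 1), (X - C (a i))).degree := by
    rw [degree_one, degree_eq_natDegree hPm.ne_zero, hPdeg]
    exact_mod_cast Nat.succ_pos n
  set ξ : ℤ[X] := 1 + ∏ i ∈ Finset.range (n + 1), (X - C (a i)) with hξ
  have hξm : ξ.Monic := by
    rw [hξ, add_comm]
    exact hPm.add_of_left hlt
  have hξdeg : ξ.natDegree = n + 1 := by
    rw [hξ, natDegree_eq_of_degree_eq (degree_add_eq_right_of_degree_lt hlt), hPdeg]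
  rw [← algebraMap_int_eq, ← hξm.irreducible_iff_irreducible_map_fraction_map]
  by_contra hirr
  rw [irreducible_iff] at hirr
  push_neg at hirr
  obtain ⟨f, g, hfg, hfu, hgu⟩ := hirr (not_isUnit_of_natDegree_pos ξ (by omega))
  have hlc : f.leadingCoeff * g.leadingCoeff = 1 := by
    have h1 : ξ.leadingCoeff = 1 := hξm
    rwa [hfg, leadingCoeff_mul] at h1
  rcases Int.mul_eq_one_iff_eq_one_or_neg_one.mp hlc with ⟨h1, h2⟩ | ⟨h1, h2⟩
  · exact aux_key n hn a hsep f g h1 h2 hfu hgu (by rw [← hξ]; exact hfg)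
  · refine aux_key n hn a hsep (-f) (-g) ?_ ?_
      (fun h => hfu (by simpa using h.neg)) (fun h => hgu (by simpa using h.neg)) ?_
    · show (-f).leadingCoeff = 1
      rw [leadingCoeff_neg, h1]; norm_num
    · show (-g).leadingCoeff = 1
      rw [leadingCoeff_neg, h2]; norm_num
    · rw [neg_mul_neg, ← hξ]; exact hfg
end

section
/- Let ξ be a polynomial of degree d over Z and k = ⌊(d+1)/2⌋. If there exist distinct integers b_0, …, b_{d−1} such that 0 < |ξ(b_i)| < k!/2^k for all 0 ≤ i ≤ d−1, then ξ is irreducible in Q[x]. -/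
/-! If `ξ` were reducible over `ℚ`, Gauss's lemma would give a factor `w ∈ ℤ[X]` of degree `e`
with `k ≤ e < d`. Its values at the `b_i` divide those of `ξ`, so they are nonzero integers of
absolute value `< k!/2^k ≤ e!/2^e`. This contradicts Pólya's lemma: Lagrange interpolation at
integers `c_0 < ⋯ < c_e` writes the leading coefficient of `w` as
`∑ w(c_i) / ∏_{j ≠ i} (c_i - c_j)`, and `∏_{j ≠ i} |c_i - c_j| ≥ i! (e - i)!`, so
`1 ≤ |lc w| ≤ max |w(c_i)| · ∑ 1 / (i! (e - i)!) = max |w(c_i)| · 2^e / e!`. -/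

open Polynomial Finset
open scoped Nat

namespace Fin

variable {n : ℕ}

theorem sub_le_sub_of_strictMono {c : Fin (n + 1) → ℤ} (hc : StrictMono c) {i j : Fin (n + 1)}
    (hij : i ≤ j) : (j : ℤ) - i ≤ c j - c i := by
  have hmono : Monotone fun k : Fin (n + 1) => c k - k :=
    Fin.monotone_iff_le_succ.2 fun k => by
      have := hc k.castSucc_lt_succ
      simp only [val_castSucc, val_succ]
      push_cast
      omega
  have := hmono hij
  simp only at this
  omega

theorem prod_Iio_sub_eq_factorial (i : Fin n) : ∏ j ∈ Iio i, ((i : ℤ) - j) = (i : ℕ)! := by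
  rw [show ∏ j ∈ Iio i, ((i : ℤ) - j) = ∏ j ∈ (Iio i).map valEmbedding, ((i : ℤ) - j) from
    (prod_map (Iio i) valEmbedding fun j : ℕ => (i : ℤ) - j).symm, map_valEmbedding_Iio,
    Nat.Iio_eq_range, ← Nat.descFactorial_self, Nat.descFactorial_eq_prod_range, Nat.cast_prod]
  refine prod_congr rfl fun j hj => ?_
  rw [Nat.cast_sub (mem_range.1 hj).le]

theorem prod_Ioi_sub_eq_factorial (i : Fin (n + 1)) :
    ∏ j ∈ Ioi i, ((j : ℤ) - i) = (n - i : ℕ)! := by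
  rw [show ∏ j ∈ Ioi i, ((j : ℤ) - i) = ∏ j ∈ (Ioi i).map valEmbedding, ((j : ℤ) - i) from
    (prod_map (Ioi i) valEmbedding fun j : ℕ => (j : ℤ) - i).symm, map_valEmbedding_Ioi,
    ← Finset.Ico_succ_left_eq_Ioo, Order.succ_eq_add_one, prod_Ico_eq_prod_range,
    ← prod_range_add_one_eq_factorial, Nat.cast_prod,
    show n + 1 - (i + 1) = n - i by omega]
  refine prod_congr rfl fun j _ => ?_
  push_cast
  ring

theorem factorial_mul_factorial_le_prod_abs_sub {c : Fin (n + 1) → ℤ} (hc : StrictMono c)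
    (i : Fin (n + 1)) : ((i : ℕ)! * (n - i)! : ℤ) ≤ ∏ j ∈ univ.erase i, |c i - c j| := by
  have hsplit : univ.erase i = Iio i ∪ Ioi i := by
    ext j
    simp [lt_or_lt_iff_ne, eq_comm]
  rw [hsplit, prod_union (disjoint_left.2 fun j hj hj' => by simp at hj hj'; omega),
    ← prod_Iio_sub_eq_factorial, ← prod_Ioi_sub_eq_factorial]
  gcongr with j hj j hj
  · rw [prod_Ioi_sub_eq_factorial]
    positivity
  · exact fun j hj => sub_nonneg.2 (by exact_mod_cast (mem_Iio.1 hj).le)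
  · exact (sub_le_sub_of_strictMono hc (mem_Iio.1 hj).le).trans (le_abs_self _)
  · exact fun j hj => sub_nonneg.2 (by exact_mod_cast (mem_Ioi.1 hj).le)
  · exact (sub_le_sub_of_strictMono hc (mem_Ioi.1 hj).le).trans
      (abs_sub_comm (c j) (c i) ▸ le_abs_self _)

end Fin

section Polya

variable {K : Type*} [Field K] [LinearOrder K] [IsStrictOrderedRing K]

theorem sum_factorial_div_factorial_mul_factorial (n : ℕ) :
    ∑ i : Fin (n + 1), (n ! : K) / ((i : ℕ)! * (n - i)!) = 2 ^ n := by
  rw [Fin.sum_univ_eq_sum_range (fun i => (n ! : K) / (i ! * (n - i)!)),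
    show (2 : K) ^ n = ((2 ^ n : ℕ) : K) by push_cast; rfl, ← Nat.sum_range_choose, Nat.cast_sum]
  exact sum_congr rfl fun i hi => (Nat.cast_choose K (mem_range_succ_iff.1 hi)).symm

theorem factorial_div_two_pow_le_factorial_div_two_pow {k e : ℕ} (hk : 1 ≤ k) (hke : k ≤ e) :
    (k ! : K) / 2 ^ k ≤ e ! / 2 ^ e := by
  induction e, hke using Nat.le_induction with
  | base => rfl
  | succ e hke ih =>
    refine ih.trans ?_
    rw [Nat.factorial_succ, pow_succ, Nat.cast_mul, mul_comm, mul_div_mul_comm]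
    refine le_mul_of_one_le_right (by positivity) ?_
    rw [one_le_div (by positivity)]
    exact_mod_cast (by omega : 2 ≤ e + 1)

theorem Polynomial.exists_abs_coeff_mul_factorial_div_le_abs_eval {n : ℕ} (p : K[X])
    (hp : p.natDegree ≤ n) {c : Fin (n + 1) → ℤ} (hc : StrictMono c) :
    ∃ i, |p.coeff n| * n ! / 2 ^ n ≤ |p.eval (c i : K)| := by
  by_contra! hsmall
  set a := |p.coeff n| * n ! / 2 ^ n
  have hinj : Set.InjOn (fun i => (c i : K)) (univ : Finset (Fin (n + 1))) :=
    fun i _ j _ hij => hc.injective (Int.cast_injective hij)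
  have hdeg : p.degree < #(univ : Finset (Fin (n + 1))) := by
    rw [Finset.card_univ, Fintype.card_fin]
    exact (degree_le_of_natDegree_le hp).trans_lt (by exact_mod_cast n.lt_succ_self)
  have hcoeff := Lagrange.coeff_eq_sum hinj hdeg
  rw [Finset.card_univ, Fintype.card_fin, Nat.add_sub_cancel] at hcoeff
  have hden (i : Fin (n + 1)) : (0 : K) < (i : ℕ)! * (n - i)! := by positivity
  have hprod (i : Fin (n + 1)) :
      ((i : ℕ)! * (n - i)! : K) ≤ ∏ j ∈ univ.erase i, |(c i - c j : K)| := by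
    exact_mod_cast Fin.factorial_mul_factorial_le_prod_abs_sub hc i
  refine lt_irrefl |p.coeff n| ?_
  calc |p.coeff n|
      ≤ ∑ i, |p.eval (c i : K)| / ((i : ℕ)! * (n - i)!) := by
        rw [hcoeff]
        refine (abs_sum_le_sum_abs _ _).trans (sum_le_sum fun i _ => ?_)
        rw [abs_div, abs_prod]
        exact div_le_div_of_nonneg_left (abs_nonneg _) (hden i) (hprod i)
    _ < ∑ i : Fin (n + 1), a / ((i : ℕ)! * (n - i)!) :=
        sum_lt_sum_of_nonempty univ_nonempty fun i _ => div_lt_div_of_pos_right (hsmall i) (hden i)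
    _ = |p.coeff n| / 2 ^ n * ∑ i : Fin (n + 1), (n ! : K) / ((i : ℕ)! * (n - i)!) := by
        rw [mul_sum]
        exact sum_congr rfl fun i _ => by ring
    _ = |p.coeff n| := by
        rw [sum_factorial_div_factorial_mul_factorial, div_mul_cancel₀ _ (by positivity)]

end Polya

namespace Polynomial

theorem exists_factorial_div_two_pow_le_abs_eval {n : ℕ} (w : ℤ[X]) (hw : w.natDegree = n)
    (hw0 : w ≠ 0) {c : Fin (n + 1) → ℤ} (hc : StrictMono c) :
    ∃ i, (n ! : ℚ) / 2 ^ n ≤ |((w.eval (c i) : ℤ) : ℚ)| := by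
  have hdeg : (w.map (Int.castRingHom ℚ)).natDegree = n := by
    rw [natDegree_map_eq_of_injective Int.cast_injective, hw]
  obtain ⟨i, hi⟩ := exists_abs_coeff_mul_factorial_div_le_abs_eval _ hdeg.le hc
  refine ⟨i, le_trans ?_ (by simpa [eval_intCast_map] using hi)⟩
  have hlead : (1 : ℚ) ≤ |(w.leadingCoeff : ℚ)| := by
    exact_mod_cast Int.one_le_abs (leadingCoeff_ne_zero.2 hw0)
  rw [← hw, coeff_natDegree, mul_div_assoc]
  exact le_mul_of_one_le_left (by positivity) hlead

theorem IsPrimitive.natDegree_pos {R : Type*} [CommSemiring R] {q : R[X]} (hq : q.IsPrimitive)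
    (hqu : ¬IsUnit q) : 0 < q.natDegree := by
  by_contra! h0
  obtain ⟨a, rfl⟩ := natDegree_eq_zero.1 (Nat.le_zero.1 h0)
  exact hqu (isUnit_C.2 (hq a dvd_rfl))

theorem irreducible_primPart_iff_irreducible_map_cast {ξ : ℤ[X]} (hξ : ξ ≠ 0) :
    Irreducible ξ.primPart ↔ Irreducible (ξ.map (Int.castRingHom ℚ)) := by
  have hcontent : IsUnit (C (ξ.content : ℚ)) :=
    isUnit_C.2 (isUnit_iff_ne_zero.2 (by exact_mod_cast content_eq_zero_iff.not.2 hξ))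
  conv_rhs => rw [ξ.eq_C_content_mul_primPart, Polynomial.map_mul, map_C, eq_intCast,
    irreducible_isUnit_mul hcontent]
  exact IsPrimitive.Int.irreducible_iff_irreducible_map_cast ξ.isPrimitive_primPart

theorem exists_dvd_of_not_irreducible_map_cast {ξ : ℤ[X]} (hξ : 0 < ξ.natDegree)
    (hred : ¬Irreducible (ξ.map (Int.castRingHom ℚ))) :
    ∃ w : ℤ[X], w ∣ ξ ∧ (ξ.natDegree + 1) / 2 ≤ w.natDegree ∧ w.natDegree < ξ.natDegree := by
  have hprim := ξ.isPrimitive_primPart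
  rw [← irreducible_primPart_iff_irreducible_map_cast (ne_zero_of_natDegree_gt hξ)] at hred
  have hunit : ¬IsUnit ξ.primPart := fun h => by
    have := natDegree_eq_zero_of_isUnit h
    rw [natDegree_primPart] at this
    omega
  obtain ⟨g, h, hgh, hg, hh⟩ : ∃ g h, ξ.primPart = g * h ∧ ¬IsUnit g ∧ ¬IsUnit h := by
    simpa [irreducible_iff, hunit] using hred
  have hgdvd : g ∣ ξ.primPart := hgh ▸ dvd_mul_right g h
  have hhdvd : h ∣ ξ.primPart := hgh ▸ dvd_mul_left h g
  have hg0 := (isPrimitive_of_dvd hprim hgdvd).natDegree_pos hg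
  have hh0 := (isPrimitive_of_dvd hprim hhdvd).natDegree_pos hh
  have hsum : g.natDegree + h.natDegree = ξ.natDegree := by
    have hgh0 : g * h ≠ 0 := hgh ▸ hprim.ne_zero
    rw [← natDegree_primPart ξ, hgh,
      natDegree_mul (left_ne_zero_of_mul hgh0) (right_ne_zero_of_mul hgh0)]
  rcases le_total g.natDegree h.natDegree with hle | hle
  · exact ⟨h, hhdvd.trans (primPart_dvd ξ), by omega, by omega⟩
  · exact ⟨g, hgdvd.trans (primPart_dvd ξ), by omega, by omega⟩

end Polynomial

/-- Polya's irreducibility criterion: if a degree-`d` integer polynomial takes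
nonzero values of absolute value less than `k!/2^k` (where `k = ⌊(d+1)/2⌋`)
at `d` distinct integers, then it is irreducible over `ℚ`. -/
theorem statement_3 (ξ : ℤ[X]) (d : ℕ) (hd : 0 < d) (hdeg : ξ.natDegree = d)
    (b : Fin d → ℤ) (hb : Function.Injective b)
    (hval : ∀ i : Fin d, ξ.eval (b i) ≠ 0 ∧
      ((|ξ.eval (b i)| : ℤ) : ℚ) < (Nat.factorial ((d + 1) / 2) : ℚ) / 2 ^ ((d + 1) / 2)) :
    Irreducible (ξ.map (Int.castRingHom ℚ)) := by
  by_contra hred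
  obtain ⟨w, hwξ, hkw, hwd⟩ := exists_dvd_of_not_irreducible_map_cast (hdeg ▸ hd) hred
  rw [hdeg] at hkw hwd
  have hs : (univ.image b).card = d := by rw [card_image_of_injective _ hb, card_fin]
  have hc := ((univ.image b).orderEmbOfFin hs).strictMono.comp (Fin.strictMono_castLE hwd)
  obtain ⟨i, hi⟩ := w.exists_factorial_div_two_pow_le_abs_eval rfl
    (ne_zero_of_natDegree_gt (show 0 < w.natDegree by omega)) hc
  obtain ⟨t, -, ht⟩ := mem_image.1 ((univ.image b).orderEmbOfFin_mem hs (Fin.castLE _ i))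
  have hwt : |w.eval (b t)| ≤ |ξ.eval (b t)| :=
    Int.le_of_dvd (abs_pos.2 (hval t).1) ((abs_dvd_abs _ _).2 (eval_dvd hwξ))
  refine lt_irrefl ((w.natDegree ! : ℚ) / 2 ^ w.natDegree) ?_
  calc (w.natDegree ! : ℚ) / 2 ^ w.natDegree
      ≤ |((w.eval (b t) : ℤ) : ℚ)| := by simpa [ht] using hi
    _ ≤ |ξ.eval (b t)| := by exact_mod_cast hwt
    _ < ((d + 1) / 2)! / 2 ^ ((d + 1) / 2) := by exact_mod_cast (hval t).2
    _ ≤ w.natDegree ! / 2 ^ w.natDegree :=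
        factorial_div_two_pow_le_factorial_div_two_pow (by omega) hkw
end

section
/- The polynomial χ = 1 − 18x + 43x² − 18x³ + x⁴ is irreducible in Q[x], has four distinct real roots, and its splitting field E = Q[x]/(χ) is isomorphic to Q(√2, √5), which is Galois over Q with Galois group Z/2Z × Z/2Z. -/
/-!
The roots of `χ` are `chiRoot (±√2) (±√5)`, where `chiRoot a b = (9 + 6a + 3b + 2ab) / 2`.
A monic factor of `χ` over `ℚ` of degree one or two would make a root, or the sum of two
distinct roots, rational. But such sums are `9 + 6a`, `9 + 3b` or `9 + 2ab`, all irrational, and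
a root is irrational because `chiRoot (-a) (-b)` is its inverse. Hence `χ` is irreducible, so it
is the minimal polynomial of `r = chiRoot √2 √5`; as `√2` and `√5` are cubic polynomials in `r`,
`ℚ(r) = ℚ(√2, √5)` has degree four. This field is the splitting field of `χ`, hence Galois, and
each automorphism squares to the identity since it can only change the signs of `√2` and `√5`.
-/

open Polynomial

theorem Polynomial.Monic.irreducible_of_irrational_roots {p : ℚ[X]} (hp : p.Monic)
    (hdeg₀ : 0 < p.natDegree) (hdeg : p.natDegree ≤ 5)
    (hsplit : (p.map (algebraMap ℚ ℝ)).Splits)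
    (hroot : ∀ u ∈ (p.map (algebraMap ℚ ℝ)).roots, Irrational u)
    (hpair : ∀ u ∈ (p.map (algebraMap ℚ ℝ)).roots, ∀ v ∈ (p.map (algebraMap ℚ ℝ)).roots,
      u ≠ v → Irrational (u + v)) :
    Irreducible p := by
  have hp1 : p ≠ 1 := fun h => by simp [h] at hdeg₀
  rw [hp.irreducible_iff_lt_natDegree_lt hp1]
  intro q hq hqdeg hqp
  set qℝ := q.map (algebraMap ℚ ℝ)
  have hpℝ : p.map (algebraMap ℚ ℝ) ≠ 0 := (hp.map _).ne_zero
  have hqℝ : qℝ ∣ p.map (algebraMap ℚ ℝ) := Polynomial.map_dvd _ hqp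
  have hsub : qℝ.roots ≤ (p.map (algebraMap ℚ ℝ)).roots := roots.le_of_dvd hpℝ hqℝ
  have hqsplit : qℝ.Splits := hsplit.of_dvd hpℝ hqℝ
  have hsum : qℝ.roots.sum = ((-q.nextCoeff : ℚ) : ℝ) := by
    have := hqsplit.nextCoeff_eq_neg_sum_roots_of_monic (hq.map _)
    rw [nextCoeff_map (algebraMap ℚ ℝ).injective, eq_ratCast] at this
    push_cast
    linarith
  have hcard : qℝ.roots.card = q.natDegree := by
    rw [← hq.natDegree_map (algebraMap ℚ ℝ), splits_iff_card_roots.mp hqsplit]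
  have hq12 : q.natDegree = 1 ∨ q.natDegree = 2 := by
    simp only [Finset.mem_Ioc] at hqdeg; omega
  rcases hq12 with h1 | h2
  · obtain ⟨u, hu⟩ := Multiset.card_eq_one.mp (hcard.trans h1)
    rw [hu, Multiset.sum_singleton] at hsum
    exact hroot u (Multiset.mem_of_le hsub (by simp [hu])) ⟨_, hsum.symm⟩
  · obtain ⟨u, v, huv⟩ := Multiset.card_eq_two.mp (hcard.trans h2)
    rw [huv] at hsub hsum
    have hu : u ∈ (p.map (algebraMap ℚ ℝ)).roots := Multiset.mem_of_le hsub (by simp)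
    have hv : v ∈ (p.map (algebraMap ℚ ℝ)).roots := Multiset.mem_of_le hsub (by simp)
    simp only [Multiset.insert_eq_cons, Multiset.sum_cons, Multiset.sum_singleton] at hsum
    obtain rfl | hne := eq_or_ne u v
    · have : Irrational (u + u) := by
        simpa [two_mul] using (hroot u hu).natCast_mul (two_ne_zero (α := ℕ))
      exact this ⟨_, hsum.symm⟩
    · exact hpair u hu v hv hne ⟨_, hsum.symm⟩

theorem irrational_of_sq_eq_natCast {x : ℝ} {n : ℕ} (hn : ¬IsSquare n) (hx : x ^ 2 = n) :
    Irrational x := by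
  have hsqrt : Irrational √n := irrational_sqrt_natCast_iff.mpr hn
  rcases sq_eq_sq_iff_eq_or_eq_neg.mp (hx.trans (Real.sq_sqrt n.cast_nonneg).symm) with h | h
  · exact h ▸ hsqrt
  · exact h ▸ hsqrt.neg

theorem AlgHom.apply_apply_eq_self_of_sq_eq_algebraMap {R A : Type*} [CommRing R] [CommRing A]
    [IsDomain A] [Algebra R A] (σ : A →ₐ[R] A) {x : A} {c : R} (hx : x ^ 2 = algebraMap R A c) :
    σ (σ x) = x := by
  have : σ x ^ 2 = x ^ 2 := by rw [← map_pow, hx, AlgHom.commutes]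
  rcases sq_eq_sq_iff_eq_or_eq_neg.mp this with h | h
  · rw [h, h]
  · rw [h, map_neg, h, neg_neg]

theorem IntermediateField.mul_self_eq_one_of_sq_mem_range {F E : Type*} [Field F] [Field E]
    [Algebra F E] {S : Set E} (hS : ∀ x ∈ S, ∃ c : F, x ^ 2 = algebraMap F E c)
    (σ : adjoin F S ≃ₐ[F] adjoin F S) : σ * σ = 1 := by
  refine AlgEquiv.coe_toAlgHom_injective (adjoin_algHom_ext F fun x hx => ?_)
  obtain ⟨c, hc⟩ := hS x hx
  have hc' : (⟨x, subset_adjoin F S hx⟩ : adjoin F S) ^ 2 = algebraMap F _ c := Subtype.ext hc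
  exact (σ : _ →ₐ[F] _).apply_apply_eq_self_of_sq_eq_algebraMap hc'

theorem IsKleinFour.of_card_of_mul_self {G : Type*} [Group G] (hcard : Nat.card G = 4)
    (h : ∀ g : G, g * g = 1) : IsKleinFour G := by
  have : Finite G := Nat.finite_of_card_ne_zero (by omega)
  have : Nontrivial G := Finite.one_lt_card_iff_nontrivial.mp (by omega)
  refine ⟨hcard, (Monoid.exponent_eq_prime_iff Nat.prime_two).mpr fun g hg => ?_⟩
  exact orderOf_eq_prime (by rw [sq, h]) hg

local notation "χ" => ((X : ℚ[X]) ^ 4 - 18 * X ^ 3 + 43 * X ^ 2 - 18 * X + 1)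

local notation "χℝ" => Polynomial.map (algebraMap ℚ ℝ) χ

noncomputable def chiRoot (a b : ℝ) : ℝ := (9 + 6 * a + 3 * b + 2 * (a * b)) / 2

theorem sqrt_two_sq : √2 ^ 2 = 2 := Real.sq_sqrt (by norm_num)

theorem sqrt_five_sq : √5 ^ 2 = 5 := Real.sq_sqrt (by norm_num)

theorem monic_chi : Monic χ := by monicity!

theorem natDegree_chi : natDegree χ = 4 := by compute_degree!

section chiRoot

open IntermediateField

variable {a b : ℝ}

theorem chiRoot_add_chiRoot_neg_right : chiRoot a b + chiRoot a (-b) = 9 + 6 * a := by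
  unfold chiRoot; ring

theorem chiRoot_add_chiRoot_neg_left : chiRoot a b + chiRoot (-a) b = 9 + 3 * b := by
  unfold chiRoot; ring

theorem chiRoot_add_chiRoot_neg_neg : chiRoot a b + chiRoot (-a) (-b) = 9 + 2 * (a * b) := by
  unfold chiRoot; ring

theorem chiRoot_mul_chiRoot_neg_neg (ha : a ^ 2 = 2) (hb : b ^ 2 = 5) :
    chiRoot a b * chiRoot (-a) (-b) = 1 := by
  unfold chiRoot; linear_combination (b ^ 2 - 9) * ha - 1 / 4 * hb

theorem chi_map_eq_prod (ha : a ^ 2 = 2) (hb : b ^ 2 = 5) :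
    χℝ = (({chiRoot a b, chiRoot a (-b), chiRoot (-a) b, chiRoot (-a) (-b)} :
      Multiset ℝ).map fun r => X - C r).prod := by
  refine Polynomial.funext fun x => ?_
  simp only [Polynomial.map_add, Polynomial.map_sub, Polynomial.map_pow, map_X,
    Polynomial.map_mul, Polynomial.map_ofNat, Polynomial.map_one, eval_add, eval_sub, eval_pow,
    eval_X, eval_mul, eval_ofNat, eval_one, Multiset.insert_eq_cons, Multiset.map_cons,
    Multiset.map_singleton, Multiset.prod_cons, Multiset.prod_singleton, eval_C]
  unfold chiRoot
  linear_combination (405 / 2 - 45 * b ^ 2 + 5 / 2 * b ^ 4 - 81 * a ^ 2 + 18 * a ^ 2 * b ^ 2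
      - a ^ 2 * b ^ 4 - 162 * x + 18 * x * b ^ 2 + 18 * x ^ 2 + 2 * x ^ 2 * b ^ 2) * ha
    + (13 / 16 - 1 / 16 * b ^ 2 - 9 / 2 * x + 17 / 2 * x ^ 2) * hb

theorem roots_chi_map (ha : a ^ 2 = 2) (hb : b ^ 2 = 5) :
    roots χℝ = {chiRoot a b, chiRoot a (-b), chiRoot (-a) b, chiRoot (-a) (-b)} := by
  rw [chi_map_eq_prod ha hb, roots_multiset_prod_X_sub_C]

theorem chiRoot_mem_roots (ha : a ^ 2 = 2) (hb : b ^ 2 = 5) : chiRoot a b ∈ roots χℝ := by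
  rw [roots_chi_map ha hb]
  exact Multiset.mem_cons_self _ _

theorem exists_eq_chiRoot_of_mem_roots {u : ℝ} (hu : u ∈ roots χℝ) :
    ∃ a b : ℝ, a ^ 2 = 2 ∧ b ^ 2 = 5 ∧ u = chiRoot a b := by
  have h2 : (-√2) ^ 2 = 2 := by rw [neg_sq, sqrt_two_sq]
  have h5 : (-√5) ^ 2 = 5 := by rw [neg_sq, sqrt_five_sq]
  simp only [roots_chi_map sqrt_two_sq sqrt_five_sq, Multiset.insert_eq_cons, Multiset.mem_cons,
    Multiset.mem_singleton] at hu
  rcases hu with rfl | rfl | rfl | rfl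
  exacts [⟨_, _, sqrt_two_sq, sqrt_five_sq, rfl⟩, ⟨_, _, sqrt_two_sq, h5, rfl⟩,
    ⟨_, _, h2, sqrt_five_sq, rfl⟩, ⟨_, _, h2, h5, rfl⟩]

theorem splits_chi_map : Splits χℝ := by
  rw [splits_iff_card_roots, roots_chi_map sqrt_two_sq sqrt_five_sq, natDegree_map, natDegree_chi]
  rfl

theorem irrational_chiRoot_add {a' b' : ℝ} (ha : a ^ 2 = 2) (hb : b ^ 2 = 5) (ha' : a' ^ 2 = 2)
    (hb' : b' ^ 2 = 5) (hne : chiRoot a b ≠ chiRoot a' b') :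
    Irrational (chiRoot a b + chiRoot a' b') := by
  have hirr (c : ℝ) (n : ℕ) (hc : Irrational c) (hn : n ≠ 0) : Irrational (9 + n * c) := by
    simpa using (hc.natCast_mul hn).natCast_add 9
  have ha₀ : Irrational a := irrational_of_sq_eq_natCast (n := 2) (by norm_num) (by simpa using ha)
  have hb₀ : Irrational b := irrational_of_sq_eq_natCast (n := 5) (by norm_num) (by simpa using hb)
  have hab₀ : Irrational (a * b) :=
    irrational_of_sq_eq_natCast (n := 10) (by norm_num) (by rw [mul_pow, ha, hb]; norm_num)
  rcases sq_eq_sq_iff_eq_or_eq_neg.mp (ha'.trans ha.symm) with h | h <;> subst a' <;>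
    rcases sq_eq_sq_iff_eq_or_eq_neg.mp (hb'.trans hb.symm) with h | h <;> subst b'
  · exact absurd rfl hne
  · simpa [chiRoot_add_chiRoot_neg_right] using hirr a 6 ha₀ (by norm_num)
  · simpa [chiRoot_add_chiRoot_neg_left] using hirr b 3 hb₀ (by norm_num)
  · simpa [chiRoot_add_chiRoot_neg_neg] using hirr (a * b) 2 hab₀ (by norm_num)

theorem irrational_chiRoot (ha : a ^ 2 = 2) (hb : b ^ 2 = 5) : Irrational (chiRoot a b) := by
  have hne : chiRoot a b ≠ chiRoot (-a) (-b) := by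
    intro h
    have hba : b = -2 * a := by unfold chiRoot at h; linarith
    nlinarith [hba ▸ hb]
  have hsum := irrational_chiRoot_add ha hb (by rwa [neg_sq]) (by rwa [neg_sq]) hne
  rw [← inv_eq_of_mul_eq_one_right (chiRoot_mul_chiRoot_neg_neg ha hb)] at hsum
  exact hsum.add_cases.elim id irrational_inv_iff.mp

theorem irreducible_chi : Irreducible χ := by
  refine monic_chi.irreducible_of_irrational_roots (by rw [natDegree_chi]; norm_num)
    (by rw [natDegree_chi]; norm_num) splits_chi_map (fun u hu => ?_) (fun u hu v hv hne => ?_)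
  · obtain ⟨a, b, ha, hb, rfl⟩ := exists_eq_chiRoot_of_mem_roots hu
    exact irrational_chiRoot ha hb
  · obtain ⟨a, b, ha, hb, rfl⟩ := exists_eq_chiRoot_of_mem_roots hu
    obtain ⟨a', b', ha', hb', rfl⟩ := exists_eq_chiRoot_of_mem_roots hv
    exact irrational_chiRoot_add ha hb ha' hb' hne

theorem card_roots_toFinset_chi_map : (roots χℝ).toFinset.card = 4 := by
  rw [Multiset.toFinset_card_of_nodup (nodup_roots irreducible_chi.separable.map),
    roots_chi_map sqrt_two_sq sqrt_five_sq]
  rfl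

theorem aeval_chiRoot_chi (ha : a ^ 2 = 2) (hb : b ^ 2 = 5) : aeval (chiRoot a b) χ = 0 :=
  (mem_aroots.mp (chiRoot_mem_roots ha hb)).2

theorem isIntegral_chiRoot (ha : a ^ 2 = 2) (hb : b ^ 2 = 5) : IsIntegral ℚ (chiRoot a b) :=
  ⟨χ, monic_chi, by rw [← aeval_def, aeval_chiRoot_chi ha hb]⟩

theorem minpoly_chiRoot (ha : a ^ 2 = 2) (hb : b ^ 2 = 5) : minpoly ℚ (chiRoot a b) = χ :=
  (minpoly.eq_of_irreducible_of_monic irreducible_chi (aeval_chiRoot_chi ha hb) monic_chi).symm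

theorem chiRoot_mem {F : IntermediateField ℚ ℝ} (ha : a ∈ F) (hb : b ∈ F) : chiRoot a b ∈ F := by
  unfold chiRoot
  aesop

theorem mem_adjoin_chiRoot_left (ha : a ^ 2 = 2) (hb : b ^ 2 = 5) : a ∈ ℚ⟮chiRoot a b⟯ := by
  refine (mem_adjoin_simple_iff ℚ _).mpr
    ⟨C (-25 / 18) + C (-4 / 9) * X + C (8 / 9) * X ^ 2 + C (-1 / 18) * X ^ 3, 1, ?_⟩
  simp only [map_add, aeval_C, map_div₀, eq_ratCast, Rat.cast_neg, Rat.cast_ofNat, map_mul,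
    aeval_X, map_pow, map_one, div_one]
  unfold chiRoot
  linear_combination (-5 / 4 + 17 / 12 * b + 49 / 36 * b ^ 2 + 1 / 4 * b ^ 3 + 3 / 2 * a
      + 3 / 2 * a * b + 1 / 2 * a * b ^ 2 + 1 / 18 * a * b ^ 3) * ha
    + (347 / 144 + 11 / 16 * b + 41 / 24 * a + 35 / 72 * a * b) * hb

theorem mem_adjoin_chiRoot_right (ha : a ^ 2 = 2) (hb : b ^ 2 = 5) : b ∈ ℚ⟮chiRoot a b⟯ := by
  refine (mem_adjoin_simple_iff ℚ _).mpr
    ⟨C (-29 / 9) + C (140 / 9) * X + C (-70 / 9) * X ^ 2 + C (4 / 9) * X ^ 3, 1, ?_⟩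
  simp only [map_add, aeval_C, map_div₀, eq_ratCast, Rat.cast_neg, Rat.cast_ofNat, map_mul,
    aeval_X, map_pow, map_one, div_one]
  unfold chiRoot
  linear_combination (16 - 22 / 3 * b - 92 / 9 * b ^ 2 - 2 * b ^ 3 - 12 * a - 12 * a * b
      - 4 * a * b ^ 2 - 4 / 9 * a * b ^ 3) * ha
    + (-148 / 9 - 11 / 2 * b - 35 / 3 * a - 35 / 9 * a * b) * hb

theorem adjoin_chiRoot_eq (ha : a ^ 2 = 2) (hb : b ^ 2 = 5) : ℚ⟮chiRoot a b⟯ = ℚ⟮a, b⟯ := by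
  refine le_antisymm (adjoin_simple_le_iff.mpr ?_) ?_
  · exact chiRoot_mem (mem_adjoin_pair_left ℚ a b) (mem_adjoin_pair_right ℚ a b)
  · rw [adjoin_le_iff, Set.insert_subset_iff, Set.singleton_subset_iff]
    exact ⟨mem_adjoin_chiRoot_left ha hb, mem_adjoin_chiRoot_right ha hb⟩

theorem finrank_adjoin_sq_eq_two_sq_eq_five (ha : a ^ 2 = 2) (hb : b ^ 2 = 5) :
    Module.finrank ℚ ℚ⟮a, b⟯ = 4 := by
  rw [← adjoin_chiRoot_eq ha hb, adjoin.finrank (isIntegral_chiRoot ha hb),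
    minpoly_chiRoot ha hb, natDegree_chi]

theorem adjoin_rootSet_chi (ha : a ^ 2 = 2) (hb : b ^ 2 = 5) :
    adjoin ℚ (rootSet χ ℝ) = ℚ⟮a, b⟯ := by
  have ha₁ : a ∈ ℚ⟮a, b⟯ := mem_adjoin_pair_left ℚ a b
  have hb₁ : b ∈ ℚ⟮a, b⟯ := mem_adjoin_pair_right ℚ a b
  refine le_antisymm (adjoin_le_iff.mpr fun u hu => ?_) ?_
  · rw [rootSet_def, Finset.mem_coe, Multiset.mem_toFinset, aroots, roots_chi_map ha hb] at hu
    simp only [Multiset.insert_eq_cons, Multiset.mem_cons, Multiset.mem_singleton] at hu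
    rcases hu with rfl | rfl | rfl | rfl <;>
      exact chiRoot_mem (by first | exact ha₁ | exact neg_mem ha₁)
        (by first | exact hb₁ | exact neg_mem hb₁)
  · rw [← adjoin_chiRoot_eq ha hb, adjoin_simple_le_iff]
    refine subset_adjoin ℚ _ ?_
    rw [rootSet_def, Finset.mem_coe, Multiset.mem_toFinset]
    exact chiRoot_mem_roots ha hb

theorem isGalois_adjoin_sq_eq_two_sq_eq_five (ha : a ^ 2 = 2) (hb : b ^ 2 = 5) :
    IsGalois ℚ ℚ⟮a, b⟯ := by
  have : IsSplittingField ℚ ℚ⟮a, b⟯ χ :=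
    adjoin_rootSet_chi ha hb ▸ adjoin_rootSet_isSplittingField splits_chi_map
  exact IsGalois.of_separable_splitting_field irreducible_chi.separable

theorem isKleinFour_aut_adjoin_sq_eq_two_sq_eq_five (ha : a ^ 2 = 2) (hb : b ^ 2 = 5) :
    IsKleinFour (ℚ⟮a, b⟯ ≃ₐ[ℚ] ℚ⟮a, b⟯) := by
  have : FiniteDimensional ℚ ℚ⟮a, b⟯ :=
    Module.finite_of_finrank_eq_succ (finrank_adjoin_sq_eq_two_sq_eq_five ha hb)
  have := isGalois_adjoin_sq_eq_two_sq_eq_five ha hb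
  refine .of_card_of_mul_self ?_ (mul_self_eq_one_of_sq_mem_range ?_)
  · rw [IsGalois.card_aut_eq_finrank, finrank_adjoin_sq_eq_two_sq_eq_five ha hb]
  · rintro x (rfl | rfl)
    exacts [⟨2, by simp [ha]⟩, ⟨5, by simp [hb]⟩]

noncomputable def adjoinRootChiEquiv (ha : a ^ 2 = 2) (hb : b ^ 2 = 5) :
    AdjoinRoot χ ≃ₐ[ℚ] ℚ⟮a, b⟯ :=
  (AdjoinRoot.algEquivOfEq ℚ _ _ (minpoly_chiRoot ha hb)).symm.trans <|
    (adjoinRootEquivAdjoin ℚ (isIntegral_chiRoot ha hb)).trans (equivOfEq (adjoin_chiRoot_eq ha hb))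

end chiRoot

/-- The polynomial `χ = 1 − 18x + 43x² − 18x³ + x⁴` is irreducible over `ℚ`, has
four distinct real roots, and `ℚ[x]/(χ)` is isomorphic to `ℚ(√2, √5)`, which is
Galois over `ℚ` with Galois group `ℤ/2 × ℤ/2`. -/
theorem statement_7 :
    Irreducible ((X : ℚ[X]) ^ 4 - 18 * X ^ 3 + 43 * X ^ 2 - 18 * X + 1) ∧
    ((((X : ℚ[X]) ^ 4 - 18 * X ^ 3 + 43 * X ^ 2 - 18 * X + 1).map
        (algebraMap ℚ ℝ)).roots.toFinset.card = 4) ∧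
    Nonempty
      (AdjoinRoot ((X : ℚ[X]) ^ 4 - 18 * X ^ 3 + 43 * X ^ 2 - 18 * X + 1) ≃ₐ[ℚ]
        ↥(IntermediateField.adjoin ℚ ({Real.sqrt 2, Real.sqrt 5} : Set ℝ))) ∧
    IsGalois ℚ ↥(IntermediateField.adjoin ℚ ({Real.sqrt 2, Real.sqrt 5} : Set ℝ)) ∧
    Nonempty
      ((↥(IntermediateField.adjoin ℚ ({Real.sqrt 2, Real.sqrt 5} : Set ℝ)) ≃ₐ[ℚ]
          ↥(IntermediateField.adjoin ℚ ({Real.sqrt 2, Real.sqrt 5} : Set ℝ))) ≃*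
        Multiplicative (ZMod 2 × ZMod 2)) := by
  have := isKleinFour_aut_adjoin_sq_eq_two_sq_eq_five sqrt_two_sq sqrt_five_sq
  exact ⟨irreducible_chi, card_roots_toFinset_chi_map,
    ⟨adjoinRootChiEquiv sqrt_two_sq sqrt_five_sq⟩,
    isGalois_adjoin_sq_eq_two_sq_eq_five sqrt_two_sq sqrt_five_sq, IsKleinFour.nonempty_mulEquiv⟩
end

section
/- Let R = O_F/p^j (F a number field, p a prime ideal, j ≥ 1), and let A ∈ M_d(R) be a matrix whose characteristic polynomial χ has d distinct roots λ_1, …, λ_d in R whose pairwise differences λ_i − λ_{i'} are units in R (i.e., distinct modulo p). Then A is diagonalizable over R: there exists a basis of R^d consisting of eigenvectors of A. -/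
open NumberField Polynomial

open Lagrange IsLocalRing
open scoped Matrix

/-!
`𝓞_F/𝔭^j` is a local ring, and the argument works over any local ring `R` with residue field
`k`. Put `N_i = ∏_{i' ≠ i} (A - λ_{i'})`; by Cayley–Hamilton every column of `N_i` is a
`λ_i`-eigenvector of `A`. The `λ_i` stay distinct in `k`, so `N_i` does not vanish mod the
maximal ideal: it acts on a `λ_i`-eigenvector of the reduced matrix by the nonzero scalar
`∏_{i' ≠ i} (λ_i - λ_{i'})`. Choosing for each `i` a column of `N_i` that is nonzero in `k^d`
gives vectors whose reductions are eigenvectors for distinct eigenvalues, hence linearly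
independent over `k`; so their determinant is a unit of `R` and they form a basis of `R^d`.
-/

theorem Ideal.Quotient.isLocalRing_pow {R : Type*} [CommRing R] (I : Ideal R) [I.IsMaximal]
    {n : ℕ} (hn : n ≠ 0) : IsLocalRing (R ⧸ I ^ n) := by
  let Rₚ := Localization.AtPrime I
  have : Nontrivial (Rₚ ⧸ maximalIdeal Rₚ ^ n) := Ideal.Quotient.nontrivial_iff.2
    ((Ideal.pow_le_self hn).trans_lt (maximalIdeal.isMaximal Rₚ).lt_top).ne
  have : IsLocalRing (Rₚ ⧸ maximalIdeal Rₚ ^ n) :=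
    .of_surjective' _ Ideal.Quotient.mk_surjective
  exact (IsLocalization.AtPrime.equivQuotMaximalIdealPow I Rₚ n).symm.toRingEquiv.isLocalRing

namespace Matrix

variable {R : Type*} [CommRing R] {n : Type*} [Fintype n] [DecidableEq n]

theorem map_aeval {S : Type*} [CommRing S] (f : R →+* S) (A : Matrix n n R) (g : R[X]) :
    (aeval A g).map f = aeval (A.map f) (g.map f) :=
  map_aeval_eq_aeval_map (ψ := f.mapMatrix)
    (by ext; simp [algebraMap_matrix_apply, apply_ite f]) g A

theorem mul_aeval_nodal_erase {A : Matrix n n R} {lam : n → R}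
    (hchar : A.charpoly = ∏ i, (X - C (lam i))) (i : n) :
    A * aeval A (nodal (Finset.univ.erase i) lam) =
      lam i • aeval A (nodal (Finset.univ.erase i) lam) := by
  have h := congrArg (aeval A) (nodal_eq_mul_nodal_erase (v := lam) (Finset.mem_univ i))
  rw [nodal, ← hchar, aeval_self_charpoly, map_mul, map_sub, aeval_X, aeval_C,
    Algebra.algebraMap_eq_smul_one, sub_mul, smul_mul_assoc, one_mul] at h
  exact sub_eq_zero.1 h.symm

theorem aeval_nodal_erase_ne_zero {K : Type*} [Field K] {B : Matrix n n K} {μ : n → K}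
    (hμ : Function.Injective μ) (hchar : B.charpoly = ∏ i, (X - C (μ i))) (i : n) :
    aeval B (nodal (Finset.univ.erase i) μ) ≠ 0 := by
  have hroot : Module.End.HasEigenvalue (toLinAlgEquiv' B) (μ i) := by
    rw [Module.End.hasEigenvalue_iff_isRoot_charpoly]
    change (toLin' B).charpoly.IsRoot _
    rw [charpoly_toLin', hchar, ← nodal]
    exact eval_nodal_at_node (Finset.mem_univ i)
  obtain ⟨u, hu⟩ := hroot.exists_hasEigenvector
  intro h0
  have h := Module.End.aeval_apply_of_hasEigenvector (p := nodal (Finset.univ.erase i) μ) hu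
  rw [aeval_algHom_apply, h0, map_zero, LinearMap.zero_apply] at h
  exact eval_nodal_not_at_node (fun i' hi' => (hμ.ne (Finset.ne_of_mem_erase hi')).symm)
    ((smul_eq_zero.1 h.symm).resolve_right hu.2)

end Matrix

namespace IsLocalRing

variable {R : Type*} [CommRing R] [IsLocalRing R] {n : Type*} [Fintype n] [DecidableEq n]

theorem injective_residue_comp_of_pairwise_isUnit_sub {ι : Type*} {lam : ι → R}
    (hdiff : Pairwise fun i i' => IsUnit (lam i - lam i')) :
    Function.Injective (residue R ∘ lam) := by
  intro i i' h
  by_contra hne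
  have hres := (residue_ne_zero_iff_isUnit _).2 (hdiff hne)
  rw [map_sub, sub_ne_zero] at hres
  exact hres h

theorem exists_basis_of_linearIndependent_residue (v : n → n → R)
    (hv : LinearIndependent (ResidueField R) fun i => residue R ∘ v i) :
    ∃ b : Module.Basis n R (n → R), ⇑b = v := by
  have hdet : IsUnit ((Pi.basisFun R n).det v) := by
    rw [Pi.basisFun_det_apply, ← residue_ne_zero_iff_isUnit, RingHom.map_det]
    exact ((Matrix.isUnit_iff_isUnit_det _).1
      (Matrix.linearIndependent_rows_iff_isUnit.1 hv)).ne_zero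
  obtain ⟨hli, hspan⟩ := (Module.Basis.is_basis_iff_det _).2 hdet
  exact ⟨.mk hli hspan.ge, Module.Basis.coe_mk _ _⟩

theorem exists_mulVec_eq_smul_residue_ne_zero {A : Matrix n n R} {lam : n → R}
    (hdiff : Pairwise fun i i' => IsUnit (lam i - lam i'))
    (hchar : A.charpoly = ∏ i, (X - C (lam i))) (i : n) :
    ∃ v : n → R, A *ᵥ v = lam i • v ∧ residue R ∘ v ≠ 0 := by
  set N := aeval A (nodal (Finset.univ.erase i) lam)
  have hchar' : (A.map (residue R)).charpoly = ∏ i, (X - C (residue R (lam i))) := by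
    simp [Matrix.charpoly_map, hchar, Polynomial.map_prod]
  have hN : N.map (residue R) ≠ 0 := by
    rw [Matrix.map_aeval, nodal, Polynomial.map_prod]
    simpa [nodal] using Matrix.aeval_nodal_erase_ne_zero
      (injective_residue_comp_of_pairwise_isUnit_sub hdiff) hchar' i
  obtain ⟨r, c, hrc⟩ : ∃ r c, residue R (N r c) ≠ 0 := by
    by_contra! h
    exact hN (Matrix.ext h)
  refine ⟨N *ᵥ Pi.single c 1, ?_, fun h => hrc ?_⟩
  · rw [Matrix.mulVec_mulVec, Matrix.mul_aeval_nodal_erase hchar, Matrix.smul_mulVec]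
  · simpa [Matrix.mulVec_single] using congrFun h r

theorem exists_basis_mulVec_eq_smul_of_charpoly_eq_prod {A : Matrix n n R} {lam : n → R}
    (hdiff : Pairwise fun i i' => IsUnit (lam i - lam i'))
    (hchar : A.charpoly = ∏ i, (X - C (lam i))) :
    ∃ b : Module.Basis n R (n → R), ∀ i, A *ᵥ b i = lam i • b i := by
  choose v hv hv0 using exists_mulVec_eq_smul_residue_ne_zero hdiff hchar
  have hli : LinearIndependent (ResidueField R) fun i => residue R ∘ v i := by
    refine Module.End.eigenvectors_linearIndependent'
      (Matrix.toLinAlgEquiv' (A.map (residue R))) _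
      (injective_residue_comp_of_pairwise_isUnit_sub hdiff) _
      fun i => ⟨Module.End.mem_eigenspace_iff.2 ?_, hv0 i⟩
    ext r
    simp [Matrix.toLinAlgEquiv'_apply, ← RingHom.map_mulVec, hv i]
  obtain ⟨b, hb⟩ := exists_basis_of_linearIndependent_residue v hli
  exact ⟨b, fun i => hb ▸ hv i⟩

end IsLocalRing

theorem statement_16_general (F : Type) [Field F] [NumberField F]
    (p : Ideal (𝓞 F)) (hp : p.IsPrime) (hpbot : p ≠ ⊥) (j : ℕ) (hj : 1 ≤ j)
    (d : ℕ)
    (A : Matrix (Fin d) (Fin d) (𝓞 F ⧸ p ^ j))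
    (lam : Fin d → 𝓞 F ⧸ p ^ j)
    (hdiff : ∀ i i' : Fin d, i ≠ i' → IsUnit (lam i - lam i'))
    (hchar : Matrix.charpoly A = ∏ i, (X - C (lam i))) :
    ∃ b : Module.Basis (Fin d) (𝓞 F ⧸ p ^ j) (Fin d → 𝓞 F ⧸ p ^ j),
      ∀ i, A.mulVec (b i) = lam i • b i := by
  have : p.IsMaximal := hp.isMaximal hpbot
  have : IsLocalRing (𝓞 F ⧸ p ^ j) := Ideal.Quotient.isLocalRing_pow p (by omega)
  exact IsLocalRing.exists_basis_mulVec_eq_smul_of_charpoly_eq_prod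
    (fun i i' h => hdiff i i' h) hchar

/-- Over `R = 𝓞_F/𝔭^j`, a matrix whose characteristic polynomial has `d` distinct
roots in `R` with pairwise differences that are units is diagonalizable: `R^d`
admits a basis of eigenvectors. -/
theorem statement_16 (F : Type) [Field F] [NumberField F]
    (p : Ideal (𝓞 F)) (hp : p.IsPrime) (hpbot : p ≠ ⊥) (j : ℕ) (hj : 1 ≤ j)
    (d : ℕ) (hd : 1 ≤ d)
    (A : Matrix (Fin d) (Fin d) (𝓞 F ⧸ p ^ j))
    (lam : Fin d → 𝓞 F ⧸ p ^ j)
    (hdiff : ∀ i i' : Fin d, i ≠ i' → IsUnit (lam i - lam i'))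
    (hchar : Matrix.charpoly A = ∏ i, (X - C (lam i))) :
    ∃ b : Module.Basis (Fin d) (𝓞 F ⧸ p ^ j) (Fin d → 𝓞 F ⧸ p ^ j),
      ∀ i, A.mulVec (b i) = lam i • b i :=
  statement_16_general F p hp hpbot j hj d A lam hdiff hchar
end

section
/- Let p be an odd prime, j ≥ 1, R = Z/p^jZ, and Q_n the hyperbolic form of rank 2n over R. Suppose A ∈ SO(Q_n; R) is diagonalizable over R with 2n distinct eigenvalues, none congruent to ±1 mod p, occurring in inverse pairs (λ_i, λ_i^{−1}), and with all pairwise differences of eigenvalues being units. Then every eigenvector of A in R^{2n} is isotropic for Q_n, and there exists an eigenbasis v_1,…,v_n,u_1,…,u_n such that ⟨v_i, u_i⟩ = 1, ⟨v_i, v_{i'}⟩ = ⟨u_i, u_{i'}⟩ = 0, and ⟨v_i, u_{i'}⟩ = 0 for i ≠ i'; in particular A is conjugate within the orthogonal group O(Q_n; R) to a diagonal matrix. -/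
/-!
`A` preserves `B(u, v) = u ⬝ᵥ Q *ᵥ v`, so eigenvectors with eigenvalues `a`, `c` satisfy
`(a c - 1) B(u, v) = 0`. As `a c - 1 = a (c - a⁻¹)` and the eigenvalues come in inverse pairs
with unit differences, `a c - 1` is a unit unless `{a, c} = {λ_i, λ_i⁻¹}`. Hence the Gram matrix
of the eigenbasis is supported on these pairs and, being invertible, has unit entries there;
rescaling one vector of each pair turns it into `Q_n`, and the change of basis matrix lies in
`O(Q_n)`. An arbitrary eigenvector `v = ∑ r_s b_s` with eigenvalue `c` has
`(μ_s - μ_t) r_s r_t = 0`, so `r_s r_t = 0` on the pairs, and every term of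
`B(v, v) = ∑ r_s r_t B(b_s, b_t)` vanishes.
-/

open Matrix

namespace Matrix

variable {R ι : Type*} [CommRing R] [Fintype ι]

theorem mulVec_dotProduct_mulVec_mulVec (P Q : Matrix ι ι R) (x y : ι → R) :
    P *ᵥ x ⬝ᵥ Q *ᵥ (P *ᵥ y) = x ⬝ᵥ (Pᵀ * Q * P) *ᵥ y := by
  rw [mulVec_mulVec, dotProduct_mulVec, dotProduct_mulVec, mul_assoc, ← vecMul_vecMul,
    ← vecMul_vecMul, ← vecMul_vecMul, vecMul_transpose]

theorem dotProduct_mulVec_comm {Q : Matrix ι ι R} (hQ : Qᵀ = Q) (u v : ι → R) :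
    u ⬝ᵥ Q *ᵥ v = v ⬝ᵥ Q *ᵥ u := by
  rw [dotProduct_mulVec, dotProduct_comm, ← mulVec_transpose, hQ]

theorem transpose_toMatrix_mul_mul_toMatrix (Q : Matrix ι ι R) (v : ι → ι → R) :
    ((Pi.basisFun R ι).toMatrix v)ᵀ * Q * (Pi.basisFun R ι).toMatrix v =
      of fun s t => v s ⬝ᵥ Q *ᵥ v t := by
  ext s t
  simp only [mul_apply, transpose_apply, Module.Basis.toMatrix_apply, Pi.basisFun_repr, of_apply,
    dotProduct, mulVec, Finset.sum_mul, Finset.mul_sum]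
  rw [Finset.sum_comm]
  exact Finset.sum_congr rfl fun _ _ => Finset.sum_congr rfl fun _ _ => by ring

theorem mul_toMatrix_eq_toMatrix_mul_diagonal [DecidableEq ι] {A : Matrix ι ι R}
    {v : ι → ι → R} {μ : ι → R} (hv : ∀ s, A *ᵥ v s = μ s • v s) :
    A * (Pi.basisFun R ι).toMatrix v = (Pi.basisFun R ι).toMatrix v * diagonal μ := by
  ext s t
  rw [mul_diagonal, mul_apply]
  have hvt := congrFun (hv t) s
  simp only [mulVec, dotProduct, Pi.smul_apply, smul_eq_mul] at hvt
  simpa [Module.Basis.toMatrix_apply, mul_comm] using hvt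

theorem isUnit_apply_of_forall_ne_eq_zero [DecidableEq ι] {G : Matrix ι ι R} (hG : IsUnit G)
    {s t : ι} (hrow : ∀ k, k ≠ t → G s k = 0) : IsUnit (G s t) := by
  obtain ⟨N, hN⟩ := hG.exists_right_inv
  have h := congrFun₂ hN s s
  rw [mul_apply, one_apply_eq, Finset.sum_eq_single t (fun k _ hk => by rw [hrow k hk, zero_mul])
    (fun ht => absurd (Finset.mem_univ t) ht)] at h
  exact IsUnit.of_mul_eq_one _ h

theorem isUnit_gram [DecidableEq ι] (b : Module.Basis ι R (ι → R)) {Q : Matrix ι ι R}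
    (hQ : IsUnit Q) : IsUnit (of fun s t => b s ⬝ᵥ Q *ᵥ b t) := by
  have hP : IsUnit ((Pi.basisFun R ι).toMatrix b) :=
    @isUnit_of_invertible _ _ _ ((Pi.basisFun R ι).invertibleToMatrix b)
  rw [← transpose_toMatrix_mul_mul_toMatrix]
  exact ((isUnit_transpose _).mpr hP |>.mul hQ).mul hP

theorem dotProduct_mulVec_eq_zero_of_eigenvector {A Q : Matrix ι ι R} (hA : Aᵀ * Q * A = Q)
    {u v : ι → R} {a c : R} (hu : A *ᵥ u = a • u) (hv : A *ᵥ v = c • v)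
    (hac : IsUnit (a * c - 1)) : u ⬝ᵥ Q *ᵥ v = 0 := by
  have h := mulVec_dotProduct_mulVec_mulVec A Q u v
  rw [hA, hu, hv, mulVec_smul, smul_dotProduct, dotProduct_smul, smul_eq_mul,
    smul_eq_mul] at h
  exact hac.mul_right_eq_zero.mp (by linear_combination h)

end Matrix

section Eigenbasis

variable {R ι : Type*} [CommRing R] [Fintype ι]

theorem Module.Basis.repr_mulVec_of_eigenvector (b : Module.Basis ι R (ι → R))
    {A : Matrix ι ι R} {μ : ι → R} (hb : ∀ s, A *ᵥ b s = μ s • b s) (v : ι → R) (s : ι) :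
    b.repr (A *ᵥ v) s = μ s * b.repr v s := by
  classical
  let f : (ι → R) →ₗ[R] R := (Finsupp.lapply s).comp (b.repr.toLinearMap.comp A.mulVecLin)
  let g : (ι → R) →ₗ[R] R := μ s • (Finsupp.lapply s).comp b.repr.toLinearMap
  have hfg : f = g := b.ext fun t => by
    by_cases h : t = s <;> simp [f, g, hb, h]
  exact LinearMap.congr_fun hfg v

theorem dotProduct_mulVec_self_eq_zero_of_eigenvector {A Q : Matrix ι ι R}
    (hA : Aᵀ * Q * A = Q) (b : Module.Basis ι R (ι → R)) {μ : ι → R}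
    (hb : ∀ s, A *ᵥ b s = μ s • b s)
    (hμ : ∀ s t, IsUnit (μ s * μ t - 1) ∨ IsUnit (μ s - μ t))
    {v : ι → R} {c : R} (hv : A *ᵥ v = c • v) : v ⬝ᵥ Q *ᵥ v = 0 := by
  classical
  have hcoeff : ∀ s, μ s * b.repr v s = c * b.repr v s := fun s => by
    rw [← b.repr_mulVec_of_eigenvector hb, hv, map_smul, Finsupp.smul_apply, smul_eq_mul]
  rw [← toBilin'_apply', ← (Matrix.toBilin' Q).sum_repr_mul_repr_mul b v v]
  refine Finset.sum_eq_zero fun s _ => Finset.sum_eq_zero fun t _ => ?_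
  simp only [toBilin'_apply', smul_eq_mul]
  rw [← mul_assoc]
  rcases hμ s t with hst | hst
  · rw [dotProduct_mulVec_eq_zero_of_eigenvector hA (hb s) (hb t) hst, mul_zero]
  · have hprod : (μ s - μ t) * (b.repr v s * b.repr v t) = 0 := by
      linear_combination b.repr v t * hcoeff s - b.repr v s * hcoeff t
    rw [hst.mul_right_eq_zero.mp hprod, zero_mul]

theorem Module.Basis.exists_transpose_mul_mul_eq_and_inv_mul_mul_eq_diagonal
    [DecidableEq ι] (w : Module.Basis ι R (ι → R)) {A Q : Matrix ι ι R} {μ : ι → R}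
    (hwA : ∀ s, A *ᵥ w s = μ s • w s) (hwQ : ∀ s t, w s ⬝ᵥ Q *ᵥ w t = Q s t) :
    ∃ g : (Matrix ι ι R)ˣ, (g : Matrix ι ι R)ᵀ * Q * g = Q ∧
      (↑g⁻¹ : Matrix ι ι R) * A * g = diagonal μ := by
  have hP : IsUnit ((Pi.basisFun R ι).toMatrix w) :=
    @isUnit_of_invertible _ _ _ ((Pi.basisFun R ι).invertibleToMatrix w)
  refine ⟨hP.unit, ?_, ?_⟩
  · rw [hP.unit_spec, transpose_toMatrix_mul_mul_toMatrix]
    exact Matrix.ext hwQ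
  · rw [mul_assoc, Units.inv_mul_eq_iff_eq_mul, hP.unit_spec,
      mul_toMatrix_eq_toMatrix_mul_diagonal hwA]

end Eigenbasis

theorem isUnit_mul_sub_one_of_mul_eq_one {R : Type*} [CommRing R] {a a' c : R}
    (ha : a * a' = 1) (hc : IsUnit (c - a')) : IsUnit (a * c - 1) := by
  rw [show a * c - 1 = a * (c - a') by linear_combination ha]
  exact (IsUnit.of_mul_eq_one _ ha).mul hc

section Hyperbolic

variable {R m : Type*} [CommRing R]

theorem fromBlocks_zero_one_one_zero_apply [DecidableEq m] (s t : m ⊕ m) :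
    (fromBlocks 0 1 1 0 : Matrix (m ⊕ m) (m ⊕ m) R) s t = if s.swap = t then 1 else 0 := by
  rcases s with i | i <;> rcases t with k | k <;> simp [one_apply]

theorem fromBlocks_zero_one_one_zero_mul_self [Fintype m] [DecidableEq m] :
    (fromBlocks 0 1 1 0 : Matrix (m ⊕ m) (m ⊕ m) R) * fromBlocks 0 1 1 0 = 1 := by
  simp [fromBlocks_multiply, fromBlocks_one]

theorem transpose_fromBlocks_zero_one_one_zero [DecidableEq m] :
    (fromBlocks 0 1 1 0 : Matrix (m ⊕ m) (m ⊕ m) R)ᵀ = fromBlocks 0 1 1 0 := by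
  simp [fromBlocks_transpose]

variable {μ : m ⊕ m → R} (hswap : ∀ s, μ s * μ s.swap = 1)
  (hdiff : ∀ s t, s ≠ t → IsUnit (μ s - μ t))
include hswap hdiff

theorem isUnit_mul_sub_one_of_ne_swap {s t : m ⊕ m} (hst : t ≠ s.swap) :
    IsUnit (μ s * μ t - 1) :=
  isUnit_mul_sub_one_of_mul_eq_one (hswap s) (hdiff t s.swap hst)

theorem isUnit_mul_sub_one_or_isUnit_sub (s t : m ⊕ m) :
    IsUnit (μ s * μ t - 1) ∨ IsUnit (μ s - μ t) := by
  by_cases hst : t = s.swap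
  · right
    exact hdiff s t (by rcases s with i | i <;> simp [hst])
  · exact .inl (isUnit_mul_sub_one_of_ne_swap hswap hdiff hst)

theorem exists_basis_eigenvector_gram_eq_fromBlocks [Fintype m] [DecidableEq m]
    {A : Matrix (m ⊕ m) (m ⊕ m) R}
    (hA : Aᵀ * fromBlocks 0 1 1 0 * A = fromBlocks 0 1 1 0)
    (b : Module.Basis (m ⊕ m) R (m ⊕ m → R)) (hb : ∀ s, A *ᵥ b s = μ s • b s) :
    ∃ w : Module.Basis (m ⊕ m) R (m ⊕ m → R), (∀ s, A *ᵥ w s = μ s • w s) ∧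
      ∀ s t, w s ⬝ᵥ fromBlocks 0 1 1 0 *ᵥ w t = (fromBlocks 0 1 1 0 : Matrix _ _ R) s t := by
  set Q : Matrix (m ⊕ m) (m ⊕ m) R := fromBlocks 0 1 1 0
  have hzero : ∀ s t, t ≠ s.swap → b s ⬝ᵥ Q *ᵥ b t = 0 := fun s t hst =>
    dotProduct_mulVec_eq_zero_of_eigenvector hA (hb s) (hb t)
      (isUnit_mul_sub_one_of_ne_swap hswap hdiff hst)
  -- row `inl i` of the invertible Gram matrix of `b` vanishes off the column `inr i`
  have hc : ∀ i, IsUnit (b (.inl i) ⬝ᵥ Q *ᵥ b (.inr i)) := fun i =>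
    isUnit_apply_of_forall_ne_eq_zero
      (isUnit_gram b (IsUnit.of_mul_eq_one _ fromBlocks_zero_one_one_zero_mul_self))
      (hzero (.inl i))
  refine ⟨b.unitsSMul (Sum.elim 1 fun i => (hc i).unit⁻¹), fun s => ?_, fun s t => ?_⟩
  · rw [Module.Basis.unitsSMul_apply, Units.smul_def, mulVec_smul, hb, smul_comm]
  simp only [Module.Basis.unitsSMul_apply, Units.smul_def, mulVec_smul, dotProduct_smul,
    smul_dotProduct, smul_eq_mul]
  rw [show Q s t = _ from fromBlocks_zero_one_one_zero_apply s t]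
  by_cases hst : t = s.swap
  · subst hst
    rcases s with i | i
    · simp
    · have hQ : Qᵀ = Q := transpose_fromBlocks_zero_one_one_zero
      simp [dotProduct_mulVec_comm hQ]
  · rw [hzero s t hst, if_neg (Ne.symm hst)]
    ring

end Hyperbolic

theorem statement_18_general (p n j : ℕ)
    (Qn : Matrix (Fin n ⊕ Fin n) (Fin n ⊕ Fin n) (ZMod (p ^ j)))
    (hQn : Qn = Matrix.fromBlocks 0 1 1 0)
    (A : Matrix (Fin n ⊕ Fin n) (Fin n ⊕ Fin n) (ZMod (p ^ j)))
    (hO : Aᵀ * Qn * A = Qn)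
    (lam : Fin n → (ZMod (p ^ j))ˣ)
    (μ : Fin n ⊕ Fin n → ZMod (p ^ j))
    (hμ : μ = Sum.elim (fun i => ((lam i : (ZMod (p ^ j))ˣ) : ZMod (p ^ j)))
      (fun i => (((lam i)⁻¹ : (ZMod (p ^ j))ˣ) : ZMod (p ^ j))))
    (b : Module.Basis (Fin n ⊕ Fin n) (ZMod (p ^ j)) (Fin n ⊕ Fin n → ZMod (p ^ j)))
    (hb : ∀ s, A.mulVec (b s) = μ s • b s)
    (hdiff : ∀ s t, s ≠ t → IsUnit (μ s - μ t)) :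
    (∀ (v : Fin n ⊕ Fin n → ZMod (p ^ j)) (c : ZMod (p ^ j)),
      A.mulVec v = c • v → v ⬝ᵥ Qn.mulVec v = 0) ∧
    (∃ w : Module.Basis (Fin n ⊕ Fin n) (ZMod (p ^ j)) (Fin n ⊕ Fin n → ZMod (p ^ j)),
      (∀ s, A.mulVec (w s) = μ s • w s) ∧
      ∀ s t, w s ⬝ᵥ Qn.mulVec (w t) = Qn s t) ∧
    ∃ g : (Matrix (Fin n ⊕ Fin n) (Fin n ⊕ Fin n) (ZMod (p ^ j)))ˣ,
      (g : Matrix (Fin n ⊕ Fin n) (Fin n ⊕ Fin n) (ZMod (p ^ j)))ᵀ * Qn *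
          (g : Matrix (Fin n ⊕ Fin n) (Fin n ⊕ Fin n) (ZMod (p ^ j))) = Qn ∧
      ((g⁻¹ : (Matrix (Fin n ⊕ Fin n) (Fin n ⊕ Fin n) (ZMod (p ^ j)))ˣ) :
          Matrix (Fin n ⊕ Fin n) (Fin n ⊕ Fin n) (ZMod (p ^ j))) * A *
        (g : Matrix (Fin n ⊕ Fin n) (Fin n ⊕ Fin n) (ZMod (p ^ j))) =
          Matrix.diagonal μ := by
  subst hQn
  have hswap : ∀ s, μ s * μ s.swap = 1 := by
    subst hμ
    rintro (i | i) <;> simp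
  obtain ⟨w, hwA, hwQ⟩ := exists_basis_eigenvector_gram_eq_fromBlocks hswap hdiff hO b hb
  exact ⟨fun v c hv => dotProduct_mulVec_self_eq_zero_of_eigenvector hO b hb
      (isUnit_mul_sub_one_or_isUnit_sub hswap hdiff) hv,
    ⟨w, hwA, hwQ⟩, w.exists_transpose_mul_mul_eq_and_inv_mul_mul_eq_diagonal hwA hwQ⟩

/-- Over `R = ℤ/p^jℤ` (p odd), suppose `A ∈ SO(Q_n; R)` is diagonalizable with
`2n` distinct eigenvalues occurring in inverse pairs `(λ_i, λ_i⁻¹)`, none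
congruent to `±1` mod `p`, and with all pairwise differences of eigenvalues
units. Then every eigenvector of `A` is isotropic, there is an eigenbasis whose
Gram matrix is `Q_n` itself, and `A` is conjugate within `O(Q_n; R)` to a
diagonal matrix. -/
theorem statement_18 (p n j : ℕ) (hp : p.Prime) (hodd : p ≠ 2) (hn : 1 ≤ n)
    (hj : 1 ≤ j)
    (Qn : Matrix (Fin n ⊕ Fin n) (Fin n ⊕ Fin n) (ZMod (p ^ j)))
    (hQn : Qn = Matrix.fromBlocks 0 1 1 0)
    (A : Matrix (Fin n ⊕ Fin n) (Fin n ⊕ Fin n) (ZMod (p ^ j)))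
    (hdet : A.det = 1) (hO : Aᵀ * Qn * A = Qn)
    (lam : Fin n → (ZMod (p ^ j))ˣ)
    (μ : Fin n ⊕ Fin n → ZMod (p ^ j))
    (hμ : μ = Sum.elim (fun i => ((lam i : (ZMod (p ^ j))ˣ) : ZMod (p ^ j)))
      (fun i => (((lam i)⁻¹ : (ZMod (p ^ j))ˣ) : ZMod (p ^ j))))
    (b : Module.Basis (Fin n ⊕ Fin n) (ZMod (p ^ j)) (Fin n ⊕ Fin n → ZMod (p ^ j)))
    (hb : ∀ s, A.mulVec (b s) = μ s • b s)
    (hnot1 : ∀ i, IsUnit ((lam i : ZMod (p ^ j)) - 1) ∧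
      IsUnit ((lam i : ZMod (p ^ j)) + 1))
    (hdiff : ∀ s t, s ≠ t → IsUnit (μ s - μ t)) :
    (∀ (v : Fin n ⊕ Fin n → ZMod (p ^ j)) (c : ZMod (p ^ j)),
      A.mulVec v = c • v → v ⬝ᵥ Qn.mulVec v = 0) ∧
    (∃ w : Module.Basis (Fin n ⊕ Fin n) (ZMod (p ^ j)) (Fin n ⊕ Fin n → ZMod (p ^ j)),
      (∀ s, A.mulVec (w s) = μ s • w s) ∧
      ∀ s t, w s ⬝ᵥ Qn.mulVec (w t) = Qn s t) ∧
    ∃ g : (Matrix (Fin n ⊕ Fin n) (Fin n ⊕ Fin n) (ZMod (p ^ j)))ˣ,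
      (g : Matrix (Fin n ⊕ Fin n) (Fin n ⊕ Fin n) (ZMod (p ^ j)))ᵀ * Qn *
          (g : Matrix (Fin n ⊕ Fin n) (Fin n ⊕ Fin n) (ZMod (p ^ j))) = Qn ∧
      ((g⁻¹ : (Matrix (Fin n ⊕ Fin n) (Fin n ⊕ Fin n) (ZMod (p ^ j)))ˣ) :
          Matrix (Fin n ⊕ Fin n) (Fin n ⊕ Fin n) (ZMod (p ^ j))) * A *
        (g : Matrix (Fin n ⊕ Fin n) (Fin n ⊕ Fin n) (ZMod (p ^ j))) =
          Matrix.diagonal μ :=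
  statement_18_general p n j Qn hQn A hO lam μ hμ b hb hdiff
end

section
/- Let F = Q(√2), O_F its ring of integers Z[√2], and A = [[0, −1],[1, 4]] ∈ SL_2(O_F). Then the matrices A and (5 − 4√2)·I + (2√2)·A = [[5−4√2, −2√2],[2√2, 5+4√2]] both lie in SL_2(O_F), commute with each other, and generate a free abelian subgroup of rank 2 inside the centralizer of A in SL_2(O_F). -/
open Matrix
lemma sq2 : Real.sqrt 2 * Real.sqrt 2 = 2 := Real.mul_self_sqrt (by norm_num)
lemma sq3 : Real.sqrt 3 * Real.sqrt 3 = 3 := Real.mul_self_sqrt (by norm_num)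
lemma sq6 : Real.sqrt 6 * Real.sqrt 6 = 6 := Real.mul_self_sqrt (by norm_num)
lemma s36 : Real.sqrt 3 * Real.sqrt 6 = 3 * Real.sqrt 2 := by
  rw [← Real.sqrt_mul (by norm_num)]
  rw [show (3:ℝ)*6 = 3^2*2 by norm_num, Real.sqrt_mul (by positivity), Real.sqrt_sq (by norm_num)]
lemma s3_pos : 0 < Real.sqrt 3 := Real.sqrt_pos.2 (by norm_num)
lemma s6_pos : 0 < Real.sqrt 6 := Real.sqrt_pos.2 (by norm_num)

lemma lam_pow (n : ℕ) : ∃ a b : ℕ, 1 ≤ a ∧ 1 ≤ b ∧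
    (2 + Real.sqrt 3)^(n+1) = a + b * Real.sqrt 3 := by
  induction n with
  | zero => exact ⟨2, 1, by norm_num, by norm_num, by push_cast; ring⟩
  | succ k ih =>
    obtain ⟨a, b, ha, hb, hab⟩ := ih
    refine ⟨2*a+3*b, a+2*b, by omega, by omega, ?_⟩
    rw [pow_succ, hab]; push_cast
    linear_combination (b:ℝ) * sq3

lemma mu_pow (n : ℕ) : ∃ c d : ℕ, 1 ≤ c ∧ 1 ≤ d ∧
    (5 + 2 * Real.sqrt 6)^(n+1) = c + d * Real.sqrt 6 := by
  induction n with
  | zero => exact ⟨5, 2, by norm_num, by norm_num, by push_cast; ring⟩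
  | succ k ih =>
    obtain ⟨c, d, hc, hd, hcd⟩ := ih
    refine ⟨5*c+12*d, 2*c+5*d, by omega, by omega, ?_⟩
    rw [pow_succ, hcd]; push_cast
    linear_combination 2*(d:ℝ) * sq6

lemma no_eq (a b c d : ℕ) (hb : 1 ≤ b) (hd : 1 ≤ d)
    (h : (a:ℝ) + b * Real.sqrt 3 = c + d * Real.sqrt 6) : False := by
  have h1 : (b:ℝ) * Real.sqrt 3 - d * Real.sqrt 6 = (c:ℝ) - a := by linarith
  have h2 : ((b:ℝ) * Real.sqrt 3 - d * Real.sqrt 6)^2 = ((c:ℝ) - a)^2 := by rw [h1]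
  have h3 : ((b:ℝ) * Real.sqrt 3 - d * Real.sqrt 6)^2
      = 3*b^2 + 6*d^2 - 6*b*d*Real.sqrt 2 := by
    linear_combination (b:ℝ)^2 * sq3 + (d:ℝ)^2 * sq6 - 2*(b:ℝ)*(d:ℝ)*s36
  have key : 6*(b:ℝ)*d*Real.sqrt 2 = 3*b^2 + 6*d^2 - ((c:ℝ)-a)^2 := by linarith
  have hbd : (0:ℝ) < 6*b*d := by
    have : (1:ℝ) ≤ b := by exact_mod_cast hb
    have : (1:ℝ) ≤ d := by exact_mod_cast hd
    nlinarith
  apply irrational_sqrt_two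
  refine ⟨(3*b^2+6*d^2 - ((c:ℚ)-a)^2)/(6*b*d), ?_⟩
  push_cast
  rw [div_eq_iff (by positivity)]
  linear_combination -key

lemma nat_ne (p r : ℕ) (h : (2 + Real.sqrt 3)^(p+1) = (5 + 2*Real.sqrt 6)^(r+1)) : False := by
  obtain ⟨a, b, _, hb, hab⟩ := lam_pow p
  obtain ⟨c, d, _, hd, hcd⟩ := mu_pow r
  rw [hab, hcd] at h
  exact no_eq a b c d hb hd h

lemma zpow_main (p r : ℤ) (h : (2 + Real.sqrt 3)^p = (5 + 2*Real.sqrt 6)^r) :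
    p = 0 ∧ r = 0 := by
  have hl : (1:ℝ) < 2 + Real.sqrt 3 := by linarith [s3_pos]
  have hm : (1:ℝ) < 5 + 2*Real.sqrt 6 := by linarith [s6_pos]
  have hlog : (p:ℝ) * Real.log (2 + Real.sqrt 3) = r * Real.log (5 + 2*Real.sqrt 6) := by
    rw [← Real.log_zpow, ← Real.log_zpow, h]
  have hL : 0 < Real.log (2 + Real.sqrt 3) := Real.log_pos hl
  have hM : 0 < Real.log (5 + 2*Real.sqrt 6) := Real.log_pos hm
  rcases lt_trichotomy p 0 with hp | hp | hp
  · have hpr : (p:ℝ) < 0 := by exact_mod_cast hp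
    have hr : (r:ℝ) < 0 := by nlinarith
    have hr' : r < 0 := by exact_mod_cast hr
    obtain ⟨k, hk⟩ : ∃ k : ℕ, p = -((k:ℤ)+1) := ⟨(-p-1).toNat, by omega⟩
    obtain ⟨l, hl'⟩ : ∃ l : ℕ, r = -((l:ℤ)+1) := ⟨(-r-1).toNat, by omega⟩
    rw [hk, hl'] at h
    rw [_root_.zpow_neg, _root_.zpow_neg] at h
    have h' : (2 + Real.sqrt 3)^((k:ℤ)+1) = (5 + 2*Real.sqrt 6)^((l:ℤ)+1) := by
      have h1 : (0:ℝ) < (2 + Real.sqrt 3)^((k:ℤ)+1) := zpow_pos (by linarith) _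
      have h2 : (0:ℝ) < (5 + 2*Real.sqrt 6)^((l:ℤ)+1) := zpow_pos (by linarith) _
      field_simp at h
      exact h.symm
    exfalso; apply nat_ne k l
    have e1 : ((k:ℤ)+1) = ((k+1 : ℕ) : ℤ) := by push_cast; ring
    have e2 : ((l:ℤ)+1) = ((l+1 : ℕ) : ℤ) := by push_cast; ring
    rw [e1, e2, zpow_natCast, zpow_natCast] at h'
    exact h'
  · refine ⟨hp, ?_⟩
    rw [hp] at hlog
    have h0 : (r:ℝ) * Real.log (5 + 2*Real.sqrt 6) = 0 := by
      push_cast at hlog; linarith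
    rcases mul_eq_zero.1 h0 with h1 | h1
    · exact_mod_cast h1
    · linarith
  · have hpr : (0:ℝ) < p := by exact_mod_cast hp
    have hr : (0:ℝ) < r := by nlinarith
    have hr' : 0 < r := by exact_mod_cast hr
    obtain ⟨k, hk⟩ : ∃ k : ℕ, p = ((k:ℤ)+1) := ⟨(p-1).toNat, by omega⟩
    obtain ⟨l, hl'⟩ : ∃ l : ℕ, r = ((l:ℤ)+1) := ⟨(r-1).toNat, by omega⟩
    rw [hk, hl'] at h
    exfalso; apply nat_ne k l
    have e1 : ((k:ℤ)+1) = ((k+1 : ℕ) : ℤ) := by push_cast; ring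
    have e2 : ((l:ℤ)+1) = ((l+1 : ℕ) : ℤ) := by push_cast; ring
    rw [e1, e2, zpow_natCast, zpow_natCast] at h
    exact h

abbrev M2 := Matrix (Fin 2) (Fin 2) ℝ

lemma s23 : Real.sqrt 2 * Real.sqrt 3 = Real.sqrt 6 := by
  rw [← Real.sqrt_mul (by norm_num)]; norm_num

noncomputable section AuxSection

def vE : Fin 2 → ℝ := ![1, -(2 + Real.sqrt 3)]

lemma eigA : (!![(0:ℝ), -1; 1, 4] : M2).mulVec vE = (2 + Real.sqrt 3) • vE := by
  ext i; fin_cases i <;>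
    simp [vE, Matrix.mulVec, dotProduct, Fin.sum_univ_succ] <;> nlinarith [sq3]

lemma eigA' : (!![(4:ℝ), 1; -1, 0] : M2).mulVec vE = (2 - Real.sqrt 3) • vE := by
  ext i; fin_cases i <;>
    simp [vE, Matrix.mulVec, dotProduct, Fin.sum_univ_succ] <;> nlinarith [sq3]

lemma eigB : (!![5 - 4 * Real.sqrt 2, -(2 * Real.sqrt 2); 2 * Real.sqrt 2, 5 + 4 * Real.sqrt 2] : M2).mulVec vE
    = (5 + 2 * Real.sqrt 6) • vE := by
  ext i; fin_cases i <;>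
    simp [vE, Matrix.mulVec, dotProduct, Fin.sum_univ_succ] <;>
    nlinarith [sq2, sq3, sq6, s23, s36]

lemma eigB' : (!![5 + 4 * Real.sqrt 2, 2 * Real.sqrt 2; -(2 * Real.sqrt 2), 5 - 4 * Real.sqrt 2] : M2).mulVec vE
    = (5 - 2 * Real.sqrt 6) • vE := by
  ext i; fin_cases i <;>
    simp [vE, Matrix.mulVec, dotProduct, Fin.sum_univ_succ] <;>
    nlinarith [sq2, sq3, sq6, s23, s36]

lemma nat_eig (u : M2) (c : ℝ) (v : Fin 2 → ℝ)
    (h : u.mulVec v = c • v) (n : ℕ) : (u^n).mulVec v = c^n • v := by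
  induction n with
  | zero => simp
  | succ k ih =>
    rw [pow_succ, ← Matrix.mulVec_mulVec, h, Matrix.mulVec_smul, ih, smul_smul, pow_succ]
    ring_nf

lemma zpow_eig (u : M2ˣ) (c : ℝˣ) (v : Fin 2 → ℝ)
    (h1 : (↑u : M2).mulVec v = (c:ℝ) • v)
    (h2 : (↑u⁻¹ : M2).mulVec v = ((c⁻¹:ℝˣ):ℝ) • v) (n : ℤ) :
    (↑(u^n) : M2).mulVec v = ((c^n : ℝˣ):ℝ) • v := by
  cases n with
  | ofNat m =>
    rw [Int.ofNat_eq_coe, zpow_natCast, zpow_natCast, Units.val_pow_eq_pow_val,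
      Units.val_pow_eq_pow_val]
    exact nat_eig _ _ _ h1 m
  | negSucc m =>
    rw [zpow_negSucc, zpow_negSucc, ← inv_pow, ← inv_pow, Units.val_pow_eq_pow_val,
      Units.val_pow_eq_pow_val]
    exact nat_eig _ _ _ h2 (m+1)

lemma inj_lemma (a b : M2ˣ)
    (ha1 : (↑a : M2).mulVec vE = (2 + Real.sqrt 3) • vE)
    (ha2 : (↑a⁻¹ : M2).mulVec vE = (2 - Real.sqrt 3) • vE)
    (hb1 : (↑b : M2).mulVec vE = (5 + 2 * Real.sqrt 6) • vE)
    (hb2 : (↑b⁻¹ : M2).mulVec vE = (5 - 2 * Real.sqrt 6) • vE) :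
    Function.Injective (fun mk : ℤ × ℤ => a ^ mk.1 * b ^ mk.2) := by
  have hA0 : (2 + Real.sqrt 3) ≠ 0 := by positivity
  have hB0 : (5 + 2 * Real.sqrt 6) ≠ 0 := by positivity
  have hinv3 : (2 + Real.sqrt 3)⁻¹ = 2 - Real.sqrt 3 :=
    inv_eq_of_mul_eq_one_right (by nlinarith [sq3])
  have hinv6 : (5 + 2 * Real.sqrt 6)⁻¹ = 5 - 2 * Real.sqrt 6 :=
    inv_eq_of_mul_eq_one_right (by nlinarith [sq6])
  set cA : ℝˣ := Units.mk0 (2 + Real.sqrt 3) hA0 with hcA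
  set cB : ℝˣ := Units.mk0 (5 + 2 * Real.sqrt 6) hB0 with hcB
  have ha2' : (↑a⁻¹ : M2).mulVec vE = ((cA⁻¹ : ℝˣ):ℝ) • vE := by
    rw [show ((cA⁻¹ : ℝˣ):ℝ) = (2 + Real.sqrt 3)⁻¹ from rfl, hinv3]; exact ha2
  have hb2' : (↑b⁻¹ : M2).mulVec vE = ((cB⁻¹ : ℝˣ):ℝ) • vE := by
    rw [show ((cB⁻¹ : ℝˣ):ℝ) = (5 + 2 * Real.sqrt 6)⁻¹ from rfl, hinv6]; exact hb2
  have zpa : ∀ n : ℤ, (↑(a^n) : M2).mulVec vE = ((cA^n : ℝˣ):ℝ) • vE :=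
    zpow_eig a cA vE ha1 ha2'
  have zpb : ∀ n : ℤ, (↑(b^n) : M2).mulVec vE = ((cB^n : ℝˣ):ℝ) • vE :=
    zpow_eig b cB vE hb1 hb2'
  have E : ∀ m n : ℤ, (↑(a^m * b^n) : M2).mulVec vE
      = ((2 + Real.sqrt 3)^m * (5 + 2 * Real.sqrt 6)^n) • vE := by
    intro m n
    rw [Units.val_mul, ← Matrix.mulVec_mulVec, zpb n, Matrix.mulVec_smul, zpa m, smul_smul]
    congr 1
    rw [Units.val_zpow_eq_zpow_val, Units.val_zpow_eq_zpow_val]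
    rw [show ((cA : ℝˣ):ℝ) = 2 + Real.sqrt 3 from rfl,
      show ((cB : ℝˣ):ℝ) = 5 + 2*Real.sqrt 6 from rfl]
    ring
  intro p q hpq
  have hpq' : a ^ p.1 * b ^ p.2 = a ^ q.1 * b ^ q.2 := hpq
  have hE : ((2 + Real.sqrt 3)^p.1 * (5 + 2 * Real.sqrt 6)^p.2) • vE
      = ((2 + Real.sqrt 3)^q.1 * (5 + 2 * Real.sqrt 6)^q.2) • vE := by
    rw [← E, ← E, hpq']
  have c0 := congrFun hE 0
  simp only [vE, Pi.smul_apply, Matrix.cons_val_zero, smul_eq_mul, mul_one] at c0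
  have key : (2 + Real.sqrt 3)^(p.1 - q.1) = (5 + 2 * Real.sqrt 6)^(q.2 - p.2) := by
    rw [zpow_sub₀ hA0, zpow_sub₀ hB0,
      div_eq_div_iff (zpow_ne_zero _ hA0) (zpow_ne_zero _ hB0)]
    linear_combination c0
  obtain ⟨h1, h2⟩ := zpow_main _ _ key
  rw [Prod.ext_iff]
  omega

lemma prodA1 : (!![(0:ℝ), -1; 1, 4] : M2) * !![4, 1; -1, 0] = 1 := by
  ext i j; fin_cases i <;> fin_cases j <;>
    simp [Matrix.mul_apply, Fin.sum_univ_succ, Matrix.one_apply]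

lemma prodA2 : (!![(4:ℝ), 1; -1, 0] : M2) * !![0, -1; 1, 4] = 1 := by
  ext i j; fin_cases i <;> fin_cases j <;>
    simp [Matrix.mul_apply, Fin.sum_univ_succ, Matrix.one_apply]

lemma prodB1 : (!![5 - 4 * Real.sqrt 2, -(2 * Real.sqrt 2); 2 * Real.sqrt 2, 5 + 4 * Real.sqrt 2] : M2) *
    !![5 + 4 * Real.sqrt 2, 2 * Real.sqrt 2; -(2 * Real.sqrt 2), 5 - 4 * Real.sqrt 2] = 1 := by
  ext i j; fin_cases i <;> fin_cases j <;>
    simp [Matrix.mul_apply, Fin.sum_univ_succ, Matrix.one_apply] <;>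
    nlinarith [sq2]

lemma prodB2 : (!![5 + 4 * Real.sqrt 2, 2 * Real.sqrt 2; -(2 * Real.sqrt 2), 5 - 4 * Real.sqrt 2] : M2) *
    !![5 - 4 * Real.sqrt 2, -(2 * Real.sqrt 2); 2 * Real.sqrt 2, 5 + 4 * Real.sqrt 2] = 1 := by
  ext i j; fin_cases i <;> fin_cases j <;>
    simp [Matrix.mul_apply, Fin.sum_univ_succ, Matrix.one_apply] <;>
    nlinarith [sq2]

lemma exists_part :
    ∃ a b : (Matrix (Fin 2) (Fin 2) ℝ)ˣ,
      (a : Matrix (Fin 2) (Fin 2) ℝ) = !![0, -1; 1, 4] ∧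
      (b : Matrix (Fin 2) (Fin 2) ℝ) =
        !![5 - 4 * Real.sqrt 2, -(2 * Real.sqrt 2); 2 * Real.sqrt 2, 5 + 4 * Real.sqrt 2] ∧
      Function.Injective (fun mk : ℤ × ℤ => a ^ mk.1 * b ^ mk.2) := by
  refine ⟨Units.mk _ _ prodA1 prodA2, Units.mk _ _ prodB1 prodB2, rfl, rfl, ?_⟩
  exact inj_lemma _ _ eigA eigA' eigB eigB'

lemma decomp_part :
    (!![5 - 4 * Real.sqrt 2, -(2 * Real.sqrt 2); 2 * Real.sqrt 2, 5 + 4 * Real.sqrt 2] : M2)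
      = (5 - 4 * Real.sqrt 2) • (1 : M2) + (2 * Real.sqrt 2) • !![0, -1; 1, 4] := by
  ext i j; fin_cases i <;> fin_cases j <;> simp [Matrix.one_apply] <;> ring

lemma memA_part : ∀ i j, (!![(0:ℝ), -1; 1, 4] : M2) i j ∈ Subring.closure ({Real.sqrt 2} : Set ℝ) := by
  have h1 : (1:ℝ) ∈ Subring.closure ({Real.sqrt 2} : Set ℝ) := one_mem _
  have h4 : (4:ℝ) ∈ Subring.closure ({Real.sqrt 2} : Set ℝ) := by
    simpa using natCast_mem (Subring.closure ({Real.sqrt 2} : Set ℝ)) 4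
  intro i j; fin_cases i <;> fin_cases j
  · exact zero_mem _
  · exact neg_mem h1
  · exact h1
  · exact h4

lemma memB_part : ∀ i j,
    (!![5 - 4 * Real.sqrt 2, -(2 * Real.sqrt 2); 2 * Real.sqrt 2, 5 + 4 * Real.sqrt 2] : M2) i j
      ∈ Subring.closure ({Real.sqrt 2} : Set ℝ) := by
  have hs : Real.sqrt 2 ∈ Subring.closure ({Real.sqrt 2} : Set ℝ) :=
    Subring.subset_closure rfl
  have h5 : (5:ℝ) ∈ Subring.closure ({Real.sqrt 2} : Set ℝ) := by
    simpa using natCast_mem (Subring.closure ({Real.sqrt 2} : Set ℝ)) 5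
  have h4 : (4:ℝ) ∈ Subring.closure ({Real.sqrt 2} : Set ℝ) := by
    simpa using natCast_mem (Subring.closure ({Real.sqrt 2} : Set ℝ)) 4
  have h2 : (2:ℝ) ∈ Subring.closure ({Real.sqrt 2} : Set ℝ) := by
    simpa using natCast_mem (Subring.closure ({Real.sqrt 2} : Set ℝ)) 2
  intro i j; fin_cases i <;> fin_cases j
  · exact sub_mem h5 (mul_mem h4 hs)
  · exact neg_mem (mul_mem h2 hs)
  · exact mul_mem h2 hs
  · exact add_mem h5 (mul_mem h4 hs)

lemma detA_part : (!![(0:ℝ), -1; 1, 4] : M2).det = 1 := by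
  rw [Matrix.det_fin_two_of]; norm_num

lemma detB_part :
    (!![5 - 4 * Real.sqrt 2, -(2 * Real.sqrt 2); 2 * Real.sqrt 2, 5 + 4 * Real.sqrt 2] : M2).det = 1 := by
  rw [Matrix.det_fin_two_of]; nlinarith [sq2]

lemma comm_part :
    (!![(0:ℝ), -1; 1, 4] : M2) *
      !![5 - 4 * Real.sqrt 2, -(2 * Real.sqrt 2); 2 * Real.sqrt 2, 5 + 4 * Real.sqrt 2]
    = !![5 - 4 * Real.sqrt 2, -(2 * Real.sqrt 2); 2 * Real.sqrt 2, 5 + 4 * Real.sqrt 2] *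
      !![(0:ℝ), -1; 1, 4] := by
  ext i j; fin_cases i <;> fin_cases j <;>
    simp [Matrix.mul_apply, Fin.sum_univ_succ] <;> ring

end AuxSection

/-- The matrices `A = [[0, −1],[1, 4]]` and
`B = (5 − 4√2)·I + (2√2)·A = [[5−4√2, −2√2],[2√2, 5+4√2]]` have entries in
`ℤ[√2] = 𝓞_{ℚ(√2)}` and determinant one, commute, and generate a free abelian
subgroup of rank 2 inside the centralizer of `A` in `SL₂(𝓞_{ℚ(√2)})`. -/
theorem statement_19 :
    let A : Matrix (Fin 2) (Fin 2) ℝ := !![0, -1; 1, 4]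
    let B : Matrix (Fin 2) (Fin 2) ℝ :=
      !![5 - 4 * Real.sqrt 2, -(2 * Real.sqrt 2); 2 * Real.sqrt 2, 5 + 4 * Real.sqrt 2]
    B = (5 - 4 * Real.sqrt 2) • (1 : Matrix (Fin 2) (Fin 2) ℝ) + (2 * Real.sqrt 2) • A ∧
    (∀ i j, A i j ∈ Subring.closure ({Real.sqrt 2} : Set ℝ)) ∧
    (∀ i j, B i j ∈ Subring.closure ({Real.sqrt 2} : Set ℝ)) ∧
    A.det = 1 ∧ B.det = 1 ∧ A * B = B * A ∧
    ∃ a b : (Matrix (Fin 2) (Fin 2) ℝ)ˣ,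
      (a : Matrix (Fin 2) (Fin 2) ℝ) = A ∧ (b : Matrix (Fin 2) (Fin 2) ℝ) = B ∧
      Function.Injective (fun mk : ℤ × ℤ => a ^ mk.1 * b ^ mk.2) := by
  exact ⟨decomp_part, memA_part, memB_part, detA_part, detB_part, comm_part, exists_part⟩
end
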